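/- arXiv:2010.09720 — 6 statements merged into one kernel-verified Lean document; each statement's English description precedes it below -/
import Mathlib

section
/- Let n ≥ 3 and consider a single layer of the hardware efficient ansatz V(a,b,c,d) on n qubits. Then there exist α ∈ ℝ with V(a,b,c,d) = e^{iα}·I_{2^n} if and only if the parameters satisfy: every daisy-chain parameter d_i is an integer multiple of π; every middle rotation parameter b_i is an integer multiple of π; and for every wire i, if the controlled-R_Y gate whose control is wire i has parameter an even integer multiple of π then a_i + c_i ∈ πℤ, while if that parameter is an odd integer multiple of π then a_i + c_i ∈ π/2 + πℤ. -/
open Matrix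
open scoped Kronecker

noncomputable def PX : Matrix (Fin 2) (Fin 2) ℂ := !![0, 1; 1, 0]
noncomputable def PY : Matrix (Fin 2) (Fin 2) ℂ := !![0, -Complex.I; Complex.I, 0]
noncomputable def PZ : Matrix (Fin 2) (Fin 2) ℂ := !![1, 0; 0, -1]
noncomputable def RX (θ : ℝ) : Matrix (Fin 2) (Fin 2) ℂ :=
  !![(Real.cos θ : ℂ), -Complex.I * (Real.sin θ : ℂ); -Complex.I * (Real.sin θ : ℂ), (Real.cos θ : ℂ)]
noncomputable def RY (θ : ℝ) : Matrix (Fin 2) (Fin 2) ℂ :=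
  !![(Real.cos θ : ℂ), -(Real.sin θ : ℂ); (Real.sin θ : ℂ), (Real.cos θ : ℂ)]
noncomputable def RZ (θ : ℝ) : Matrix (Fin 2) (Fin 2) ℂ :=
  !![Complex.exp (-Complex.I * (θ : ℂ)), 0; 0, Complex.exp (Complex.I * (θ : ℂ))]
noncomputable def P0 : Matrix (Fin 2) (Fin 2) ℂ := !![1, 0; 0, 0]
noncomputable def P1 : Matrix (Fin 2) (Fin 2) ℂ := !![0, 0; 0, 1]
noncomputable def CRY (θ : ℝ) : Matrix (Fin 2 × Fin 2) (Fin 2 × Fin 2) ℂ :=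
  P0 ⊗ₖ (1 : Matrix (Fin 2) (Fin 2) ℂ) + P1 ⊗ₖ RY θ
noncomputable def CNOT : Matrix (Fin 2 × Fin 2) (Fin 2 × Fin 2) ℂ :=
  P0 ⊗ₖ (1 : Matrix (Fin 2) (Fin 2) ℂ) + P1 ⊗ₖ PX

/-- successor modulo n on `Fin n` -/
def fsucc {n : ℕ} (i : Fin n) : Fin n := ⟨(i.val + 1) % n, Nat.mod_lt _ i.pos⟩

/-- embedding into `n` qubits of a two-qubit gate acting on qubit `p` (first tensor factor)
and qubit `q` (second tensor factor), as the identity on all other qubits -/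
noncomputable def embed2 (n : ℕ) (p q : Fin n)
    (g : Matrix (Fin 2 × Fin 2) (Fin 2 × Fin 2) ℂ) :
    Matrix (Fin n → Fin 2) (Fin n → Fin 2) ℂ :=
  fun i j => g (i p, i q) (j p, j q) *
    ∏ k : Fin n, if k = p ∨ k = q then 1 else (if i k = j k then (1 : ℂ) else 0)

/-- embedding into `n` qubits of a single-qubit gate acting on qubit `p` -/
noncomputable def embed1 (n : ℕ) (p : Fin n) (g : Matrix (Fin 2) (Fin 2) ℂ) :
    Matrix (Fin n → Fin 2) (Fin n → Fin 2) ℂ :=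
  fun i j => g (i p) (j p) *
    ∏ k : Fin n, if k = p then 1 else (if i k = j k then (1 : ℂ) else 0)

/-- the single-qubit rotation part of a HEA layer: `⊗ᵢ R_Z(cᵢ)·R_Y(bᵢ)·R_Z(aᵢ)` -/
noncomputable def heaR (n : ℕ) (a b c : Fin n → ℝ) :
    Matrix (Fin n → Fin 2) (Fin n → Fin 2) ℂ :=
  fun i j => ∏ k : Fin n, (RZ (c k) * RY (b k) * RZ (a k)) (i k) (j k)

/-- the daisy chain of controlled-R_Y gates, `C_{n,1}(d_n)·…·C_{2,3}(d_2)·C_{1,2}(d_1)`,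
where `C_{i,i+1}(t)` has control qubit `i` and target qubit `i+1 (mod n)` -/
noncomputable def heaD (n : ℕ) (d : Fin n → ℝ) :
    Matrix (Fin n → Fin 2) (Fin n → Fin 2) ℂ :=
  (((List.finRange n).map fun i => embed2 n i (fsucc i) (CRY (d i))).reverse).prod

/-- a single layer of the hardware efficient ansatz on `n` qubits -/
noncomputable def heaV (n : ℕ) (a b c d : Fin n → ℝ) :
    Matrix (Fin n → Fin 2) (Fin n → Fin 2) ℂ :=
  heaD n d * heaR n a b c

/-- the k-Toffoli gate on n = k+1 qubits: identity except that the bottom-right 2×2 block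
(basis states whose first n−1 bits are all 1) is the Pauli X. -/
noncomputable def toff (n : ℕ) : Matrix (Fin n → Fin 2) (Fin n → Fin 2) ℂ :=
  if h : 0 < n then
    fun i j =>
      if (∀ k : Fin n, k.val + 1 < n → (i k = 1 ∧ j k = 1)) then
        PX (i ⟨n - 1, by omega⟩) (j ⟨n - 1, by omega⟩)
      else if i = j then 1 else 0
  else 1

/-! Three facts about the daisy chain `D` suffice. Every gate acts trivially when its control
is `0`, so the row of `D` at `|0…0⟩` is that of the identity. Every wire is the target of exactly
one gate, so along a closed path of basis states no gate can flip its target, and the diagonal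
entry of `D` at `y` is `∏_{yᵢ = 1} cos dᵢ`. When every `sin dᵢ = 0`, every gate and hence `D` is
diagonal.

Write `R = ⊗ᵢ Mᵢ` with `Mᵢ = R_Z(cᵢ) R_Y(bᵢ) R_Z(aᵢ)`. If `D R = e^{iα} I`, the row of `R` at
`|0…0⟩` is that of `e^{iα} I`, so the `(0,1)` entry of every `Mᵢ`, a multiple of `sin bᵢ`,
vanishes. Then `R` is diagonal, and comparing the diagonal entries at `|0…0⟩` and at the state
with a single `1` on wire `i` gives `cos dᵢ · e^{i(aᵢ+cᵢ)} = e^{-i(aᵢ+cᵢ)}`. This says that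
`cos dᵢ = ±1` with the stated parity condition on `aᵢ + cᵢ`. Conversely, these conditions make
each `diag(1, cos dᵢ) · Mᵢ` a scalar, and `V` is their tensor product. -/

namespace Matrix

section PiKronecker

variable {ι α R : Type*} [Fintype ι]

def piKronecker [CommMonoid R] (A : ι → Matrix α α R) : Matrix (ι → α) (ι → α) R :=
  of fun y x => ∏ k, A k (y k) (x k)

@[simp]
theorem piKronecker_apply [CommMonoid R] (A : ι → Matrix α α R) (y x : ι → α) :
    piKronecker A y x = ∏ k, A k (y k) (x k) :=
  rfl

variable [CommSemiring R]

theorem piKronecker_mul [DecidableEq ι] [Fintype α] (A B : ι → Matrix α α R) :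
    piKronecker A * piKronecker B = piKronecker fun k => A k * B k := by
  ext y x
  simp only [mul_apply, piKronecker_apply, Fintype.prod_sum, ← Finset.prod_mul_distrib]

theorem piKronecker_diagonal [DecidableEq α] (v : ι → α → R) :
    piKronecker (fun k => diagonal (v k)) = diagonal fun y => ∏ k, v k (y k) := by
  ext y x
  by_cases hyx : y = x
  · simp [hyx]
  · obtain ⟨k, hk⟩ := Function.ne_iff.mp hyx
    rw [diagonal_apply_ne _ hyx, piKronecker_apply]
    exact Finset.prod_eq_zero (Finset.mem_univ k) (diagonal_apply_ne _ hk)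

theorem piKronecker_smul_one [DecidableEq α] (c : ι → R) :
    piKronecker (fun k => c k • (1 : Matrix α α R)) = (∏ k, c k) • 1 := by
  simp_rw [← diagonal_one, ← diagonal_smul, piKronecker_diagonal]
  congr 1
  simp [Pi.smul_def]

theorem piKronecker_update_mul [DecidableEq ι] (A : ι → Matrix α α R) (y x : ι → α) (j : ι)
    (s t : α) :
    piKronecker A (Function.update y j s) (Function.update x j t) * A j (y j) (x j) =
      A j s t * piKronecker A y x := by
  simp only [piKronecker_apply, Fintype.prod_eq_mul_prod_compl j, Function.update_self]
  rw [Finset.prod_congr rfl fun k hk => by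
    rw [Function.update_of_ne (Finset.mem_compl.mp hk |> Finset.notMem_singleton.mp),
      Function.update_of_ne (Finset.mem_compl.mp hk |> Finset.notMem_singleton.mp)]]
  ring

theorem IsDiag.piKronecker {A : ι → Matrix α α R} (hA : ∀ k, (A k).IsDiag) :
    (piKronecker A).IsDiag := by
  intro y x hyx
  obtain ⟨k, hk⟩ := Function.ne_iff.mp hyx
  exact Finset.prod_eq_zero (Finset.mem_univ k) (hA k hk)

end PiKronecker

section ListProd

variable {m R : Type*} [Fintype m] [DecidableEq m] [Semiring R]

theorem list_prod_apply_eq_zero {r : m → m → Prop} (hr : ∀ y, r y y)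
    (htr : ∀ x y z, r x y → r y z → r x z) {l : List (Matrix m m R)}
    (hl : ∀ A ∈ l, ∀ y z, ¬r y z → A y z = 0) {y z : m} (hyz : ¬r y z) : l.prod y z = 0 := by
  induction l generalizing y z with
  | nil => exact one_apply_ne fun h => hyz (h ▸ hr y)
  | cons A l ih =>
    rw [List.prod_cons, mul_apply]
    refine Finset.sum_eq_zero fun w _ => ?_
    by_cases hyw : r y w
    · rw [ih (fun B hB => hl B (List.mem_cons_of_mem A hB)) fun hwz => hyz (htr _ _ _ hyw hwz),
        mul_zero]
    · rw [hl A List.mem_cons_self y w hyw, zero_mul]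

variable {ι α κ : Type*} [Fintype ι] [DecidableEq ι] [Fintype α] [DecidableEq α]

/-- A path of basis states from `y` back to `y` can change a wire only at the one gate
targeting it, hence not at all. -/
theorem list_prod_map_apply_self {A : κ → Matrix (ι → α) (ι → α) R} {τ : κ → ι}
    (hτ : Function.Injective τ) (hA : ∀ i y z, A i y z ≠ 0 → ∀ k ≠ τ i, y k = z k)
    {l : List κ} (hl : l.Nodup) (y : ι → α) :
    (l.map A).prod y y = (l.map fun i => A i y y).prod := by
  induction l with
  | nil => simp
  | cons i l ih =>
    rw [List.nodup_cons] at hl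
    simp only [List.map_cons, List.prod_cons, mul_apply]
    rw [Finset.sum_eq_single y _ (by simp), ih hl.2]
    intro z _ hzy
    by_contra h
    have hiz := hA i y z (left_ne_zero_of_mul h)
    have hzy' : ∀ k ∉ l.map τ, z k = y k := by
      by_contra hne
      refine right_ne_zero_of_mul h (list_prod_apply_eq_zero
        (r := fun u v : ι → α => ∀ k ∉ l.map τ, u k = v k) (fun _ _ _ => rfl)
        (fun _ _ _ h₁ h₂ k hk => (h₁ k hk).trans (h₂ k hk)) ?_ hne)
      simp only [List.forall_mem_map]
      intro j hj u v huv
      by_contra hne'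
      exact huv fun k hk => hA j u v hne' k fun hkj => hk (hkj ▸ List.mem_map_of_mem hj)
    refine hzy (funext fun k => ?_)
    by_cases hk : k = τ i
    · refine hzy' k fun hmem => hl.1 ?_
      obtain ⟨j, hj, hjk⟩ := List.mem_map.mp hmem
      rwa [← hτ (hjk.trans hk)]
    · exact (hiz k hk).symm

end ListProd

end Matrix

noncomputable def cryDiag (θ : ℝ) (u : Fin 2) : ℂ :=
  if u = 1 then (Real.cos θ : ℂ) else 1

theorem CRY_apply_self (θ : ℝ) (u v : Fin 2) : CRY θ (u, v) (u, v) = cryDiag θ u := by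
  fin_cases u <;> fin_cases v <;> simp [CRY, P0, P1, RY, cryDiag]

theorem CRY_apply_ne_zero {θ : ℝ} {u v s t : Fin 2} (h : CRY θ (u, v) (s, t) ≠ 0) :
    u = s ∧ (v = t ∨ u = 1 ∧ Real.sin θ ≠ 0) := by
  fin_cases u <;> fin_cases v <;> fin_cases s <;> fin_cases t <;>
    simp_all [CRY, P0, P1, RY] <;> exact_mod_cast h

section Gates

variable {n : ℕ}

theorem embed2_CRY_apply_self (p q : Fin n) (θ : ℝ) (y : Fin n → Fin 2) :
    embed2 n p q (CRY θ) y y = cryDiag θ (y p) := by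
  simp [embed2, CRY_apply_self]

theorem eq_or_of_embed2_CRY_apply_ne_zero {p q : Fin n} {θ : ℝ} {y z : Fin n → Fin 2}
    (h : embed2 n p q (CRY θ) y z ≠ 0) (k : Fin n) :
    y k = z k ∨ k = q ∧ y p = 1 ∧ Real.sin θ ≠ 0 := by
  obtain ⟨hp, hq⟩ := CRY_apply_ne_zero (left_ne_zero_of_mul h)
  by_cases hkq : k = q
  · subst hkq
    exact hq.imp_right fun h' => ⟨rfl, h'⟩
  by_cases hkp : k = p
  · exact Or.inl (hkp ▸ hp)
  have hk := Finset.prod_ne_zero_iff.mp (right_ne_zero_of_mul h) k (Finset.mem_univ k)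
  simp only [hkp, hkq, or_self, if_false, ne_eq, ite_eq_right_iff, one_ne_zero] at hk
  exact Or.inl (not_not.mp hk)

theorem fsucc_injective : Function.Injective (fsucc (n := n)) := by
  intro i j h
  have hij : (i : ℕ) + 1 ≡ (j : ℕ) + 1 [MOD n] := congrArg Fin.val h
  exact Fin.ext (Nat.ModEq.eq_of_lt_of_lt (Nat.ModEq.add_right_cancel' 1 hij) i.isLt j.isLt)

theorem heaD_eq_list_prod (d : Fin n → ℝ) :
    heaD n d =
      ((List.finRange n).reverse.map fun i => embed2 n i (fsucc i) (CRY (d i))).prod := by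
  rw [heaD, List.map_reverse]

theorem heaD_apply_self (d : Fin n → ℝ) (y : Fin n → Fin 2) :
    heaD n d y y = ∏ i, cryDiag (d i) (y i) := by
  rw [heaD_eq_list_prod, Matrix.list_prod_map_apply_self fsucc_injective
    (fun _ _ _ h k hk => (eq_or_of_embed2_CRY_apply_ne_zero h k).resolve_right fun h' => hk h'.1)
    (List.nodup_reverse.mpr (List.nodup_finRange n))]
  simp only [embed2_CRY_apply_self, List.map_reverse, List.prod_reverse, Fin.prod_univ_def]

theorem heaD_zero_apply (d : Fin n → ℝ) (x : Fin n → Fin 2) :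
    heaD n d 0 x = (1 : Matrix (Fin n → Fin 2) (Fin n → Fin 2) ℂ) 0 x := by
  by_cases hx : x = 0
  · subst hx
    simp [heaD_apply_self, cryDiag]
  rw [Matrix.one_apply_ne (Ne.symm hx), heaD_eq_list_prod]
  refine Matrix.list_prod_apply_eq_zero (r := fun y z => y = 0 → z = 0) (fun _ => id)
    (fun _ _ _ h₁ h₂ h => h₂ (h₁ h)) ?_ fun h => hx (h rfl)
  simp only [List.forall_mem_map]
  intro i _ y z hyz
  obtain ⟨rfl, hz⟩ := Classical.not_imp.mp hyz
  by_contra h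
  refine hz (funext fun k => ((eq_or_of_embed2_CRY_apply_ne_zero h k).resolve_right ?_).symm)
  simp

theorem heaD_eq_diagonal {d : Fin n → ℝ} (hd : ∀ i, Real.sin (d i) = 0) :
    heaD n d = Matrix.diagonal fun y => ∏ i, cryDiag (d i) (y i) := by
  ext y z
  by_cases hyz : y = z
  · rw [hyz, heaD_apply_self, Matrix.diagonal_apply_eq]
  rw [Matrix.diagonal_apply_ne _ hyz, heaD_eq_list_prod]
  refine Matrix.list_prod_apply_eq_zero (r := Eq) (fun _ => rfl) (fun _ _ _ => Eq.trans) ?_ hyz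
  simp only [List.forall_mem_map]
  intro i _ u v huv
  by_contra h
  exact huv (funext fun k => (eq_or_of_embed2_CRY_apply_ne_zero h k).resolve_right
    fun h' => h'.2.2 (hd i))

end Gates

section Trigonometry

open Real

theorem sin_eq_zero_iff_exists_eq_pi_mul {x : ℝ} : sin x = 0 ↔ ∃ u : ℤ, x = π * u :=
  sin_eq_zero_iff.trans (exists_congr fun u => by rw [eq_comm, mul_comm])

theorem ofReal_cos_mul_exp_eq_exp_neg_iff (d s : ℝ) :
    (cos d : ℂ) * Complex.exp (s * Complex.I) = Complex.exp (-(s * Complex.I)) ↔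
      cos d = 1 ∧ sin s = 0 ∨ cos d = -1 ∧ cos s = 0 := by
  have hneg : -((s : ℂ) * Complex.I) = ((-s : ℝ) : ℂ) * Complex.I := by push_cast; ring
  rw [hneg, Complex.exp_mul_I, Complex.exp_mul_I, ← Complex.ofReal_cos, ← Complex.ofReal_sin,
    ← Complex.ofReal_cos, ← Complex.ofReal_sin, cos_neg, sin_neg, Complex.ext_iff]
  simp only [Complex.mul_re, Complex.mul_im, Complex.add_re, Complex.add_im, Complex.ofReal_re,
    Complex.ofReal_im, Complex.I_re, Complex.I_im]
  have hsc := sin_sq_add_cos_sq s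
  constructor
  · rintro ⟨hre, him⟩
    by_cases hcs : cos s = 0
    · have hss : sin s ≠ 0 := fun h => by simp [h, hcs] at hsc
      exact Or.inr ⟨mul_right_cancel₀ hss (by linarith), hcs⟩
    · have hcd : cos d = 1 := mul_right_cancel₀ hcs (by linarith)
      exact Or.inl ⟨hcd, by rw [hcd] at him; linarith⟩
  · rintro (⟨hcd, hss⟩ | ⟨hcd, hcs⟩) <;> constructor <;> simp [*]

theorem cos_eq_one_and_sin_eq_zero_or_cos_eq_neg_one_and_cos_eq_zero_iff (d s : ℝ) :
    cos d = 1 ∧ sin s = 0 ∨ cos d = -1 ∧ cos s = 0 ↔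
      (∃ w : ℤ, d = π * w) ∧
        (∀ w : ℤ, d = π * (2 * w) → ∃ v : ℤ, s = π * v) ∧
        (∀ w : ℤ, d = π * (2 * w - 1) → ∃ v : ℤ, s = π * (1 / 2 + v)) := by
  have hparity (k w : ℤ) (h : π * (2 * k) = π * (2 * w - 1)) : False := by
    have := mul_left_cancel₀ pi_ne_zero h
    have : 2 * k = 2 * w - 1 := by exact_mod_cast this
    omega
  constructor
  · rintro (⟨hd, hs⟩ | ⟨hd, hs⟩)
    · obtain ⟨k, rfl⟩ := (cos_eq_one_iff d).mp hd
      refine ⟨⟨2 * k, by push_cast; ring⟩, fun _ _ => ?_, fun w hw => ?_⟩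
      · exact sin_eq_zero_iff_exists_eq_pi_mul.mp hs
      · exact (hparity k w (by rw [← hw]; ring)).elim
    · obtain ⟨k, rfl⟩ := cos_eq_neg_one_iff.mp hd
      refine ⟨⟨2 * k + 1, by push_cast; ring⟩, fun w hw => ?_, fun _ _ => ?_⟩
      · exact (hparity w (k + 1) (by rw [← hw]; push_cast; ring)).elim
      · obtain ⟨v, hv⟩ := cos_eq_zero_iff.mp hs
        exact ⟨v, by rw [hv]; ring⟩
  · rintro ⟨⟨w, hw⟩, heven, hodd⟩
    obtain ⟨k, rfl | rfl⟩ := Int.even_or_odd' w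
    · obtain ⟨v, hv⟩ := heven k (by rw [hw]; push_cast; ring)
      exact Or.inl ⟨(cos_eq_one_iff d).mpr ⟨k, by rw [hw]; push_cast; ring⟩,
        sin_eq_zero_iff_exists_eq_pi_mul.mpr ⟨v, hv⟩⟩
    · obtain ⟨v, hv⟩ := hodd (k + 1) (by rw [hw]; push_cast; ring)
      exact Or.inr ⟨cos_eq_neg_one_iff.mpr ⟨k, by rw [hw]; push_cast; ring⟩,
        cos_eq_zero_iff.mpr ⟨v, by rw [hv]; ring⟩⟩

end Trigonometry

noncomputable def rotZYZ (a b c : ℝ) : Matrix (Fin 2) (Fin 2) ℂ :=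
  RZ c * RY b * RZ a

theorem rotZYZ_eq (a b c : ℝ) :
    rotZYZ a b c =
      !![Complex.exp (-(↑(a + c) * Complex.I)) * Real.cos b,
          -(Complex.exp (↑(a - c) * Complex.I) * Real.sin b);
        Complex.exp (↑(c - a) * Complex.I) * Real.sin b,
          Complex.exp (↑(a + c) * Complex.I) * Real.cos b] := by
  ext i j
  fin_cases i <;> fin_cases j <;>
    simp only [rotZYZ, RZ, RY, Matrix.mul_apply, Fin.sum_univ_two] <;> simp <;>
    rw [mul_right_comm, ← Complex.exp_add] <;> ring_nf

theorem rotZYZ_apply_zero_one_eq_zero_iff {a b c : ℝ} :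
    rotZYZ a b c 0 1 = 0 ↔ Real.sin b = 0 := by
  simp only [rotZYZ_eq, Matrix.of_apply, Matrix.cons_val', Matrix.cons_val_zero,
    Matrix.cons_val_one, Matrix.empty_val', Matrix.cons_val_fin_one, neg_eq_zero,
    mul_eq_zero, Complex.exp_ne_zero, false_or, Complex.ofReal_eq_zero]

theorem isDiag_rotZYZ {a b c : ℝ} (hb : Real.sin b = 0) : (rotZYZ a b c).IsDiag := by
  intro i j hij
  fin_cases i <;> fin_cases j <;> simp_all [rotZYZ_eq]

theorem ofReal_cos_mul_rotZYZ_one_one_eq_iff {a b c : ℝ} (d : ℝ) (hb : Real.sin b = 0) :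
    (Real.cos d : ℂ) * rotZYZ a b c 1 1 = rotZYZ a b c 0 0 ↔
      (Real.cos d : ℂ) * Complex.exp (↑(a + c) * Complex.I) =
        Complex.exp (-(↑(a + c) * Complex.I)) := by
  have hcb : (Real.cos b : ℂ) ≠ 0 := by
    rcases Real.sin_eq_zero_iff_cos_eq.mp hb with h | h <;> simp [h]
  simp only [rotZYZ_eq, Matrix.of_apply, Matrix.cons_val', Matrix.cons_val_zero,
    Matrix.cons_val_one, Matrix.empty_val', Matrix.cons_val_fin_one]
  rw [← mul_assoc, mul_left_inj' hcb]

theorem diagonal_cryDiag_mul_rotZYZ {a b c d : ℝ} (hb : Real.sin b = 0)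
    (had : (Real.cos d : ℂ) * Complex.exp (↑(a + c) * Complex.I) =
      Complex.exp (-(↑(a + c) * Complex.I))) :
    Matrix.diagonal (cryDiag d) * rotZYZ a b c =
      Complex.exp (↑(b - (a + c)) * Complex.I) • 1 := by
  have hexp : Complex.exp (↑(b - (a + c)) * Complex.I) =
      Real.cos b * Complex.exp (-(↑(a + c) * Complex.I)) := by
    rw [show (↑(b - (a + c)) : ℂ) * Complex.I = b * Complex.I + -(↑(a + c) * Complex.I) by
      push_cast; ring, Complex.exp_add, Complex.exp_mul_I, ← Complex.ofReal_sin, hb,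
      ← Complex.ofReal_cos]
    simp
  ext i j
  fin_cases i <;> fin_cases j <;>
    simp only [Matrix.diagonal_mul, rotZYZ_eq, Matrix.of_apply, Matrix.cons_val',
      Matrix.cons_val_zero, Matrix.cons_val_one, Matrix.empty_val', Matrix.cons_val_fin_one,
      Matrix.smul_apply, Matrix.one_apply, cryDiag, hb, hexp, Fin.zero_eta, Fin.mk_one,
      Fin.isValue, if_true, if_false, Complex.ofReal_zero, mul_zero, neg_zero, smul_eq_mul,
      zero_ne_one, one_ne_zero]
  · ring
  · linear_combination (Real.cos b : ℂ) * had

section Layer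

variable {n : ℕ}

theorem heaR_eq_piKronecker (a b c : Fin n → ℝ) :
    heaR n a b c = Matrix.piKronecker fun k => rotZYZ (a k) (b k) (c k) :=
  rfl

theorem heaV_eq_smul_one {a b c d : Fin n → ℝ} (hb : ∀ i, Real.sin (b i) = 0)
    (hd : ∀ i, Real.sin (d i) = 0)
    (had : ∀ i, (Real.cos (d i) : ℂ) * Complex.exp (↑(a i + c i) * Complex.I) =
      Complex.exp (-(↑(a i + c i) * Complex.I))) :
    heaV n a b c d = Complex.exp (Complex.I * ↑(∑ i, (b i - (a i + c i)))) • 1 := by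
  rw [heaV, heaD_eq_diagonal hd, heaR_eq_piKronecker, ← Matrix.piKronecker_diagonal,
    Matrix.piKronecker_mul]
  simp_rw [diagonal_cryDiag_mul_rotZYZ (hb _) (had _), Matrix.piKronecker_smul_one,
    ← Complex.exp_sum, Complex.ofReal_sum, Finset.mul_sum, mul_comm Complex.I]

section PhaseIdentity

variable {d : Fin n → ℝ} {M : Fin n → Matrix (Fin 2) (Fin 2) ℂ} {L : ℂ}

theorem piKronecker_zero_apply_of_heaD_mul_eq (h : heaD n d * Matrix.piKronecker M = L • 1)
    (x : Fin n → Fin 2) :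
    Matrix.piKronecker M 0 x = L * (1 : Matrix (Fin n → Fin 2) (Fin n → Fin 2) ℂ) 0 x := by
  calc Matrix.piKronecker M 0 x
      = ((1 : Matrix (Fin n → Fin 2) (Fin n → Fin 2) ℂ) * Matrix.piKronecker M) 0 x := by
        rw [Matrix.one_mul]
    _ = (heaD n d * Matrix.piKronecker M) 0 x := by simp only [Matrix.mul_apply, heaD_zero_apply]
    _ = L * (1 : Matrix (Fin n → Fin 2) (Fin n → Fin 2) ℂ) 0 x := by
      rw [h, Matrix.smul_apply, smul_eq_mul]

theorem apply_zero_one_eq_zero_of_heaD_mul_eq (hL : L ≠ 0)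
    (h : heaD n d * Matrix.piKronecker M = L • 1) (j : Fin n) : M j 0 1 = 0 := by
  have hj := Matrix.piKronecker_update_mul M 0 0 j 0 1
  have hne : Function.update (0 : Fin n → Fin 2) j 1 ≠ 0 := fun h => by simpa using congrFun h j
  have h0 : Function.update (0 : Fin n → Fin 2) j 0 = 0 := by simp
  rw [h0, Pi.zero_apply, piKronecker_zero_apply_of_heaD_mul_eq h,
    piKronecker_zero_apply_of_heaD_mul_eq h, Matrix.one_apply_ne hne.symm, Matrix.one_apply_eq,
    mul_zero, zero_mul, mul_one] at hj
  exact (mul_eq_zero.mp hj.symm).resolve_right hL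

theorem ofReal_cos_mul_apply_one_one_of_heaD_mul_eq (hL : L ≠ 0) (hM : ∀ k, (M k).IsDiag)
    (h : heaD n d * Matrix.piKronecker M = L • 1) (j : Fin n) :
    (Real.cos (d j) : ℂ) * M j 1 1 = M j 0 0 := by
  have hdiag (y : Fin n → Fin 2) : heaD n d y y * Matrix.piKronecker M y y = L := by
    have hy := congrFun (congrFun h y) y
    rwa [← (Matrix.IsDiag.piKronecker hM).diagonal_diag, Matrix.mul_diagonal, Matrix.smul_apply,
      Matrix.one_apply_eq, smul_eq_mul, mul_one] at hy
  have hR00 : Matrix.piKronecker M 0 0 = L := by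
    simpa using piKronecker_zero_apply_of_heaD_mul_eq h 0
  have h1 := hdiag (Function.update 0 j 1)
  have h2 := Matrix.piKronecker_update_mul M 0 0 j 1 1
  simp only [Pi.zero_apply, hR00] at h2
  have hDj : heaD n d (Function.update 0 j 1) (Function.update 0 j 1) = Real.cos (d j) := by
    rw [heaD_apply_self, Finset.prod_eq_single j (fun k _ hk => by simp [cryDiag, hk]) (by simp)]
    simp [cryDiag]
  rw [hDj] at h1
  refine mul_right_cancel₀ hL ?_
  linear_combination (-(Real.cos (d j) : ℂ)) * h2 + M j 0 0 * h1

end PhaseIdentity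

theorem exists_heaV_eq_exp_smul_one_iff (a b c d : Fin n → ℝ) :
    (∃ α : ℝ, heaV n a b c d =
        Complex.exp (Complex.I * α) • (1 : Matrix (Fin n → Fin 2) (Fin n → Fin 2) ℂ)) ↔
      ∀ i, Real.sin (b i) = 0 ∧ (Real.cos (d i) : ℂ) * Complex.exp (↑(a i + c i) * Complex.I) =
        Complex.exp (-(↑(a i + c i) * Complex.I)) := by
  constructor
  · rintro ⟨α, hV⟩ i
    rw [heaV, heaR_eq_piKronecker] at hV
    have hL := Complex.exp_ne_zero (Complex.I * α)
    have hb (k : Fin n) : Real.sin (b k) = 0 :=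
      rotZYZ_apply_zero_one_eq_zero_iff.mp (apply_zero_one_eq_zero_of_heaD_mul_eq hL hV k)
    exact ⟨hb i, (ofReal_cos_mul_rotZYZ_one_one_eq_iff (d i) (hb i)).mp
      (ofReal_cos_mul_apply_one_one_of_heaD_mul_eq hL (fun k => isDiag_rotZYZ (hb k)) hV i)⟩
  · intro h
    refine ⟨_, heaV_eq_smul_one (fun i => (h i).1) (fun i => ?_) (fun i => (h i).2)⟩
    rcases (ofReal_cos_mul_exp_eq_exp_neg_iff _ _).mp (h i).2 with ⟨hd, -⟩ | ⟨hd, -⟩ <;>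
      simp [Real.sin_eq_zero_iff_cos_eq, hd]

end Layer

theorem hea_layer_eq_phase_id_iff_general (n : ℕ) (a b c d : Fin n → ℝ) :
    (∃ α : ℝ, heaV n a b c d =
        Complex.exp (Complex.I * α) • (1 : Matrix (Fin n → Fin 2) (Fin n → Fin 2) ℂ)) ↔
      ((∀ i : Fin n, ∃ w : ℤ, d i = Real.pi * w) ∧
       (∀ i : Fin n, ∃ u : ℤ, b i = Real.pi * u) ∧
       (∀ i : Fin n,
         (∀ w : ℤ, d i = Real.pi * (2 * w) → ∃ v : ℤ, a i + c i = Real.pi * v) ∧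
         (∀ w : ℤ, d i = Real.pi * (2 * w - 1) →
           ∃ v : ℤ, a i + c i = Real.pi * (1 / 2 + v)))) := by
  rw [exists_heaV_eq_exp_smul_one_iff]
  simp only [ofReal_cos_mul_exp_eq_exp_neg_iff,
    cos_eq_one_and_sin_eq_zero_or_cos_eq_neg_one_and_cos_eq_zero_iff]
  simp only [sin_eq_zero_iff_exists_eq_pi_mul, forall_and]
  exact and_left_comm

/-- for `n ≥ 3`, a single HEA layer equals the identity up to a global phase
iff every daisy-chain parameter `dᵢ ∈ πℤ`, every middle rotation parameter `bᵢ ∈ πℤ`, and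
for every wire `i`: if the controlled-R_Y gate controlled by wire `i` has angle an even
multiple of π then `aᵢ + cᵢ ∈ πℤ`, while if that angle is an odd multiple of π then
`aᵢ + cᵢ ∈ π(1/2 + ℤ)`. -/
theorem hea_layer_eq_phase_id_iff (n : ℕ) (hn : 3 ≤ n) (a b c d : Fin n → ℝ) :
    (∃ α : ℝ, heaV n a b c d =
        Complex.exp (Complex.I * α) • (1 : Matrix (Fin n → Fin 2) (Fin n → Fin 2) ℂ)) ↔
      ((∀ i : Fin n, ∃ w : ℤ, d i = Real.pi * w) ∧
       (∀ i : Fin n, ∃ u : ℤ, b i = Real.pi * u) ∧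
       (∀ i : Fin n,
         (∀ w : ℤ, d i = Real.pi * (2 * w) → ∃ v : ℤ, a i + c i = Real.pi * v) ∧
         (∀ w : ℤ, d i = Real.pi * (2 * w - 1) →
           ∃ v : ℤ, a i + c i = Real.pi * (1 / 2 + v)))) :=
  hea_layer_eq_phase_id_iff_general n a b c d
end

section
/- Let N ≥ 1, let T ∈ M_N(ℂ) have real entries with Tᵀ = T and Tr(T) ≠ 0, let G ∈ M_N(ℂ) be Hermitian, let B ∈ M_N(ℂ) be unitary, let A ∈ M_N(ℂ), and suppose there exist θ₀, α ∈ ℝ with A·exp(−iθ₀G)·B = e^{iα}·I_N. Then the function θ ↦ d(A·exp(−iθG)·B, T) = 1 − |Tr(Tᴴ·A·exp(−iθG)·B)|/N has derivative 0 at θ₀. -/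
/-! Write `k θ = Tr(Tᴴ A e^{-iθG} B)`. Inserting `B Bᴴ = 1` and using `A e^{-iθ₀G} B = φ • 1`
gives `k θ₀ = φ Tr T` and `k' θ₀ = -i φ Tr(T BᴴGB)`. Both traces are real, being traces of a
Hermitian matrix and of a product of two Hermitian matrices, so `k' θ₀` is orthogonal to `k θ₀` in
`ℂ ≅ ℝ²`; as `k θ₀ ≠ 0`, `|k|` is stationary at `θ₀`. -/

open Matrix

open scoped RealInnerProductSpace

theorem HasDerivAt.norm_of_inner_eq_zero {F : Type*} [NormedAddCommGroup F]
    [InnerProductSpace ℝ F] {f : ℝ → F} {f' : F} {x : ℝ} (hf : HasDerivAt f f' x)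
    (h0 : f x ≠ 0) (horth : ⟪f x, f'⟫ = 0) : HasDerivAt (‖f ·‖) 0 x := by
  have hsq : HasDerivAt (‖f ·‖ ^ 2) 0 x := by simpa [horth] using hf.norm_sq
  simpa using hsq.sqrt (by positivity)

theorem Complex.inner_mul_neg_I_mul_mul_eq_zero (z : ℂ) {a b : ℂ} (ha : IsSelfAdjoint a)
    (hb : IsSelfAdjoint b) : ⟪z * a, -Complex.I * (z * b)⟫ = 0 := by
  simp [Complex.inner, Complex.mul_re, Complex.mul_im, Complex.conj_eq_iff_im.mp ha,
    Complex.conj_eq_iff_im.mp hb]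
  ring

theorem Matrix.isHermitian_of_im_eq_zero_of_transpose_eq {n : Type*} {T : Matrix n n ℂ}
    (hreal : ∀ i j, (T i j).im = 0) (hsymm : Tᵀ = T) : T.IsHermitian := by
  ext i j
  rw [conjTranspose_apply, Complex.star_def, Complex.conj_eq_iff_im.mpr (hreal j i)]
  exact congrFun (congrFun hsymm i) j

theorem Matrix.IsHermitian.isSelfAdjoint_trace {n α : Type*} [Fintype n] [AddCommMonoid α]
    [StarAddMonoid α] {A : Matrix n n α} (hA : A.IsHermitian) : IsSelfAdjoint A.trace := by
  rw [IsSelfAdjoint, ← trace_conjTranspose, hA.eq]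

theorem Matrix.IsHermitian.isSelfAdjoint_trace_mul {n α : Type*} [Fintype n] [CommSemiring α]
    [StarRing α] {A B : Matrix n n α} (hA : A.IsHermitian) (hB : B.IsHermitian) :
    IsSelfAdjoint (A * B).trace := by
  rw [IsSelfAdjoint, ← trace_conjTranspose, conjTranspose_mul, hA.eq, hB.eq, trace_mul_comm]

theorem hasDerivAt_exp_neg_I_mul_smul {𝔸 : Type*} [NormedRing 𝔸] [NormedAlgebra ℂ 𝔸]
    [CompleteSpace 𝔸] (G : 𝔸) (θ : ℝ) :
    HasDerivAt (fun t : ℝ => NormedSpace.exp ((-(Complex.I * t)) • G))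
      (NormedSpace.exp ((-(Complex.I * θ)) • G) * ((-Complex.I) • G)) θ := by
  have hlin : HasDerivAt (fun t : ℝ => -(Complex.I * t)) (-Complex.I) θ :=
    ((hasDerivAt_id θ).ofReal_comp.const_mul Complex.I).neg.congr_deriv (by simp)
  have := (hasDerivAt_exp_smul_const G _).scomp θ hlin
  rw [← mul_smul_comm] at this
  exact this

theorem Matrix.hasDerivAt_trace_mul_exp_mul {n : Type*} [Fintype n] [DecidableEq n]
    (M B G : Matrix n n ℂ) (θ : ℝ) :
    HasDerivAt (fun t : ℝ => (M * NormedSpace.exp ((-(Complex.I * t)) • G) * B).trace)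
      (-Complex.I * (M * NormedSpace.exp ((-(Complex.I * θ)) • G) * G * B).trace) θ := by
  let : NormedRing (Matrix n n ℂ) := Matrix.linftyOpNormedRing
  let : NormedAlgebra ℂ (Matrix n n ℂ) := Matrix.linftyOpNormedAlgebra
  have hprod := ((hasDerivAt_exp_neg_I_mul_smul G θ).const_mul M).mul_const B
  have htrace := ((traceLinearMap n ℂ ℂ).toContinuousLinearMap.restrictScalars ℝ).hasFDerivAt
    |>.comp_hasDerivAt θ hprod
  refine htrace.congr_deriv ?_
  change (M * (NormedSpace.exp _ * (-Complex.I) • G) * B).trace = _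
  rw [mul_smul_comm, Matrix.mul_smul, Matrix.smul_mul, trace_smul, smul_eq_mul,
    ← Matrix.mul_assoc]

theorem cost_deriv_zero_at_identity_config_general (N : ℕ)
    (T G B A : Matrix (Fin N) (Fin N) ℂ)
    (hTreal : ∀ i j, (T i j).im = 0) (hTsym : Tᵀ = T) (hTtr : T.trace ≠ 0)
    (hG : G.IsHermitian) (hB : B ∈ Matrix.unitaryGroup (Fin N) ℂ) (θ₀ : ℝ)
    (hid : ∃ α : ℝ,
      A * NormedSpace.exp ((-(Complex.I * (θ₀ : ℂ))) • G) * B =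
        Complex.exp (Complex.I * α) • (1 : Matrix (Fin N) (Fin N) ℂ)) :
    HasDerivAt
      (fun θ : ℝ =>
        1 - ‖(Tᴴ * (A * NormedSpace.exp ((-(Complex.I * (θ : ℂ))) • G) * B)).trace‖ / N)
      0 θ₀ := by
  obtain ⟨α, hα⟩ := hid
  set E₀ := NormedSpace.exp ((-(Complex.I * (θ₀ : ℂ))) • G)
  set φ := Complex.exp (Complex.I * α)
  have hT : T.IsHermitian := isHermitian_of_im_eq_zero_of_transpose_eq hTreal hTsym
  have hBBH : B * Bᴴ = 1 := mem_unitaryGroup_iff.mp hB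
  have hvalue : (Tᴴ * (A * E₀ * B)).trace = φ * T.trace := by
    rw [hα, hT.eq, Matrix.mul_smul, mul_one, trace_smul, smul_eq_mul]
  have hslope : (Tᴴ * A * E₀ * G * B).trace = φ * (T * (Bᴴ * G * B)).trace := by
    calc (Tᴴ * A * E₀ * G * B).trace = (Tᴴ * (A * E₀ * B) * (Bᴴ * G * B)).trace := by
          simp only [Matrix.mul_assoc]
          rw [← Matrix.mul_assoc B, hBBH, one_mul]
      _ = φ * (T * (Bᴴ * G * B)).trace := by
          rw [hα, hT.eq, Matrix.mul_smul, mul_one, Matrix.smul_mul, trace_smul, smul_eq_mul]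
  have hderiv : HasDerivAt
      (fun θ : ℝ => (Tᴴ * (A * NormedSpace.exp ((-(Complex.I * θ)) • G) * B)).trace)
      (-Complex.I * (φ * (T * (Bᴴ * G * B)).trace)) θ₀ := by
    rw [← hslope]
    simpa only [Matrix.mul_assoc] using hasDerivAt_trace_mul_exp_mul (Tᴴ * A) B G θ₀
  have horth := Complex.inner_mul_neg_I_mul_mul_eq_zero φ hT.isSelfAdjoint_trace
    (hT.isSelfAdjoint_trace_mul (isHermitian_conjTranspose_mul_mul B hG))
  rw [← hvalue] at horth
  have hne : (Tᴴ * (A * E₀ * B)).trace ≠ 0 := hvalue ▸ mul_ne_zero (Complex.exp_ne_zero _) hTtr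
  simpa using ((hderiv.norm_of_inner_eq_zero hne horth).div_const N).const_sub 1

/-- if `A·exp(−iθ₀G)·B` is the identity up to phase (G Hermitian, B unitary,
T real symmetric with nonzero trace), then `θ ↦ d(A·exp(−iθG)·B, T)` has derivative 0 at θ₀. -/
theorem cost_deriv_zero_at_identity_config (N : ℕ) (hN : 1 ≤ N)
    (T G B A : Matrix (Fin N) (Fin N) ℂ)
    (hTreal : ∀ i j, (T i j).im = 0) (hTsym : Tᵀ = T) (hTtr : T.trace ≠ 0)
    (hG : G.IsHermitian) (hB : B ∈ Matrix.unitaryGroup (Fin N) ℂ) (θ₀ : ℝ)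
    (hid : ∃ α : ℝ,
      A * NormedSpace.exp ((-(Complex.I * (θ₀ : ℂ))) • G) * B =
        Complex.exp (Complex.I * α) • (1 : Matrix (Fin N) (Fin N) ℂ)) :
    HasDerivAt
      (fun θ : ℝ =>
        1 - ‖(Tᴴ * (A * NormedSpace.exp ((-(Complex.I * (θ : ℂ))) • G) * B)).trace‖ / N)
      0 θ₀ :=
  cost_deriv_zero_at_identity_config_general N T G B A hTreal hTsym hTtr hG hB θ₀ hid
end

section
/- Let N ≥ 1, let T ∈ M_N(ℂ) have real entries with Tᵀ = T and Tr(T) ≠ 0, let G ∈ M_N(ℂ) be Hermitian, let B ∈ M_N(ℂ) be unitary, let A ∈ M_N(ℂ), and suppose there exist θ₀, α ∈ ℝ with A·exp(−iθ₀G)·B = e^{iα}·I_N. Set H = Bᴴ·G·B. Then the second derivative at θ₀ of the function θ ↦ d(A·exp(−iθG)·B, T) equals ( Tr(T)·Tr(Tᵀ·H²) − (Tr(Tᵀ·H))² ) / ( N·|Tr(T)| ), where both traces Tr(T), Tr(Tᵀ·H), Tr(Tᵀ·H²) are real numbers. -/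
/-!
Because `B` is unitary and `A exp(-iθ₀G) B = e^{iα}`, conjugating by `B` and splitting the
exponential at `θ₀` gives `A exp(-iθG) B = e^{iα} exp(-i(θ - θ₀)H)` with `H = BᴴGB`. The cost is
therefore `1 - |g(θ - θ₀)|/N` for `g s = Tr(T exp(-isH))`, where `g 0 = Tr T`, `g' 0 = -i Tr(TH)`
and `g'' 0 = -Tr(TH²)`, the three traces being real since `T` and `H` are Hermitian. The formula
then comes from `|g|'' = (|g'|² + ⟪g, g''⟫)/|g| - ⟪g, g'⟫²/|g|³`, valid wherever `g ≠ 0`.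
-/

open Matrix Complex
open scoped RealInnerProductSpace

section NormDeriv

variable {E : Type*} [NormedAddCommGroup E] [InnerProductSpace ℝ E]

theorem HasDerivAt.norm {f : ℝ → E} {f' : E} {x : ℝ} (hf : HasDerivAt f f' x) (hx : f x ≠ 0) :
    HasDerivAt (‖f ·‖) (⟪f x, f'⟫ / ‖f x‖) x := by
  have hpos : 0 < ‖f x‖ := norm_pos_iff.mpr hx
  have h := hf.norm_sq.sqrt (by positivity)
  simp only [Real.sqrt_sq (norm_nonneg _)] at h
  convert h using 1
  field_simp

theorem iteratedDeriv_two_norm {g g' : ℝ → E} {g'' : E} {t : ℝ}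
    (hg : ∀ s, HasDerivAt g (g' s) s) (hg' : HasDerivAt g' g'' t) (ht : g t ≠ 0) :
    iteratedDeriv 2 (‖g ·‖) t =
      (‖g' t‖ ^ 2 + ⟪g t, g''⟫) / ‖g t‖ - ⟪g t, g' t⟫ ^ 2 / ‖g t‖ ^ 3 := by
  have hderiv : deriv (‖g ·‖) =ᶠ[nhds t] fun s => ⟪g s, g' s⟫ / ‖g s‖ := by
    filter_upwards [(hg t).continuousAt.eventually_ne ht] with s hs
    exact ((hg s).norm hs).deriv
  have hpos : 0 < ‖g t‖ := norm_pos_iff.mpr ht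
  have h := ((hg t).inner ℝ hg').fun_div ((hg t).norm ht) hpos.ne'
  rw [iteratedDeriv_succ, iteratedDeriv_one, hderiv.deriv_eq, h.deriv,
    real_inner_comm (g' t) (g' t), real_inner_self_eq_norm_sq]
  field_simp
  ring

end NormDeriv

theorem Matrix.isHermitian_of_transpose_eq_of_im_eq_zero {n : Type*} {A : Matrix n n ℂ}
    (hsymm : Aᵀ = A) (hreal : ∀ i j, (A i j).im = 0) : A.IsHermitian := by
  ext i j
  calc star (A j i) = A j i := conj_eq_iff_im.mpr (hreal j i)
    _ = A i j := by rw [← transpose_apply A i j, hsymm]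

variable {n : Type*} [Fintype n]

theorem Matrix.IsHermitian.trace_im {A : Matrix n n ℂ} (hA : A.IsHermitian) : A.trace.im = 0 := by
  rw [← conj_eq_iff_im, ← star_def, ← trace_conjTranspose, hA.eq]

theorem Matrix.IsHermitian.trace_mul_im {A B : Matrix n n ℂ} (hA : A.IsHermitian)
    (hB : B.IsHermitian) : (A * B).trace.im = 0 := by
  rw [← conj_eq_iff_im, ← star_def, ← trace_conjTranspose, conjTranspose_mul, hA.eq, hB.eq,
    trace_mul_comm]

variable [DecidableEq n]

theorem Matrix.IsHermitian.trace_mul_mul_self_im {A B : Matrix n n ℂ} (hA : A.IsHermitian)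
    (hB : B.IsHermitian) : (A * B * B).trace.im = 0 := by
  rw [Matrix.mul_assoc, ← sq]
  exact hA.trace_mul_im (hB.pow 2)

theorem Matrix.exp_unitary_conj {U : Matrix n n ℂ} (hU : U ∈ unitaryGroup n ℂ) (A : Matrix n n ℂ) :
    NormedSpace.exp (Uᴴ * A * U) = Uᴴ * NormedSpace.exp A * U := by
  have hinv : U⁻¹ = Uᴴ := inv_eq_left_inv (Unitary.star_mul_self_of_mem hU)
  rw [← hinv]
  exact exp_conj' U A (Unitary.isUnit_coe (U := ⟨U, hU⟩))

theorem Matrix.exp_add_smul (A : Matrix n n ℂ) (a b : ℂ) :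
    NormedSpace.exp ((a + b) • A) = NormedSpace.exp (a • A) * NormedSpace.exp (b • A) := by
  rw [add_smul]
  exact exp_add_of_commute _ _ (((Commute.refl A).smul_left a).smul_right b)

theorem mul_exp_mul_eq_of_identity_config {A G B : Matrix n n ℂ} (hB : B ∈ unitaryGroup n ℂ)
    {θ₀ α : ℝ} (hid : A * NormedSpace.exp ((-(I * θ₀)) • G) * B = exp (I * α) • 1) (θ : ℝ) :
    A * NormedSpace.exp ((-(I * θ)) • G) * B =
      exp (I * α) • NormedSpace.exp ((-(I * ↑(θ - θ₀))) • (Bᴴ * G * B)) := by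
  have hsplit : -(I * θ) = -(I * θ₀) + -(I * ↑(θ - θ₀)) := by push_cast; ring
  have hBB : B * Bᴴ = 1 := Unitary.mul_star_self_of_mem hB
  calc A * NormedSpace.exp ((-(I * θ)) • G) * B
      = (A * NormedSpace.exp ((-(I * θ₀)) • G) * B) *
          (Bᴴ * NormedSpace.exp ((-(I * ↑(θ - θ₀))) • G) * B) := by
        rw [hsplit, exp_add_smul]
        simp only [Matrix.mul_assoc, ← Matrix.mul_assoc B, hBB, Matrix.one_mul]
    _ = exp (I * α) • NormedSpace.exp ((-(I * ↑(θ - θ₀))) • (Bᴴ * G * B)) := by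
        rw [hid, smul_mul_assoc, Matrix.one_mul, ← exp_unitary_conj hB, Matrix.mul_smul,
          Matrix.smul_mul]

theorem hasDerivAt_trace_mul_exp_neg_I_smul (C H : Matrix n n ℂ) (s : ℝ) :
    HasDerivAt (fun s : ℝ => (C * NormedSpace.exp ((-(I * s)) • H)).trace)
      (-I * (C * H * NormedSpace.exp ((-(I * s)) • H)).trace) s := by
  -- any normed algebra structure works here, as the statement does not mention the norm
  let : NormedRing (Matrix n n ℂ) := Matrix.linftyOpNormedRing
  let : NormedAlgebra ℂ (Matrix n n ℂ) := Matrix.linftyOpNormedAlgebra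
  have hphase : HasDerivAt (fun s : ℝ => -(I * s)) (-I) s := by
    simpa using ((hasDerivAt_id s).ofReal_comp.const_mul I).fun_neg
  have hexp := ((hasDerivAt_exp_smul_const' H (-(I * s))).scomp s hphase).const_mul C
  have htrace := (traceLinearMap n ℂ ℂ).toContinuousLinearMap.restrictScalars ℝ
    |>.hasFDerivAt.comp_hasDerivAt s hexp
  rw [show -I * (C * H * NormedSpace.exp ((-(I * s)) • H)).trace
      = (C * -I • (H * NormedSpace.exp ((-(I * s)) • H))).trace by
    rw [mul_smul_comm, trace_smul, smul_eq_mul, Matrix.mul_assoc]]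
  exact htrace

theorem iteratedDeriv_two_norm_trace_mul_exp_neg_I_smul_zero {T H : Matrix n n ℂ}
    (hT : T.IsHermitian) (hH : H.IsHermitian) (htr : T.trace ≠ 0) :
    iteratedDeriv 2 (fun s : ℝ => ‖(T * NormedSpace.exp ((-(I * s)) • H)).trace‖) 0 =
      ((T * H).trace.re ^ 2 - T.trace.re * (T * H * H).trace.re) / ‖T.trace‖ := by
  have hexp0 : NormedSpace.exp ((-(I * ((0 : ℝ) : ℂ))) • H) = 1 := by simp
  have hg' := (hasDerivAt_trace_mul_exp_neg_I_smul (T * H) H 0).const_mul (-I)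
  rw [iteratedDeriv_two_norm (hasDerivAt_trace_mul_exp_neg_I_smul T H) hg'
    (by rwa [hexp0, mul_one])]
  have ha : T.trace = (T.trace.re : ℂ) := ext rfl (by simp [hT.trace_im])
  have hb : (T * H).trace = ((T * H).trace.re : ℂ) := ext rfl (by simp [hT.trace_mul_im hH])
  have hc : (T * H * H).trace = ((T * H * H).trace.re : ℂ) :=
    ext rfl (by simp [hT.trace_mul_mul_self_im hH])
  simp only [hexp0, mul_one, Complex.inner]
  rw [ha, hb, hc]
  simp only [neg_mul, norm_neg, Complex.norm_mul, norm_I, norm_real, Real.norm_eq_abs, one_mul,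
    sq_abs, mul_neg, neg_neg, conj_ofReal, mul_re, I_re, ofReal_re, zero_mul, I_im, ofReal_im,
    mul_zero, sub_self, mul_im, zero_add, zero_sub, add_zero, sub_zero, neg_re, neg_zero, ne_eq,
    OfNat.ofNat_ne_zero, not_false_eq_true, zero_pow, zero_div]
  ring

theorem cost_second_deriv_at_identity_config_general (N : ℕ)
    (T G B A : Matrix (Fin N) (Fin N) ℂ)
    (hTreal : ∀ i j, (T i j).im = 0) (hTsym : Tᵀ = T) (hTtr : T.trace ≠ 0)
    (hG : G.IsHermitian) (hB : B ∈ Matrix.unitaryGroup (Fin N) ℂ) (θ₀ : ℝ)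
    (hid : ∃ α : ℝ,
      A * NormedSpace.exp ((-(Complex.I * (θ₀ : ℂ))) • G) * B =
        Complex.exp (Complex.I * α) • (1 : Matrix (Fin N) (Fin N) ℂ)) :
    (T.trace).im = 0 ∧ ((Tᵀ * (Bᴴ * G * B)).trace).im = 0 ∧
    ((Tᵀ * (Bᴴ * G * B) * (Bᴴ * G * B)).trace).im = 0 ∧
    iteratedDeriv 2
        (fun θ : ℝ =>
          1 - ‖(Tᴴ * (A * NormedSpace.exp ((-(Complex.I * (θ : ℂ))) • G) * B)).trace‖ / N)
        θ₀ =
      ((T.trace).re * ((Tᵀ * (Bᴴ * G * B) * (Bᴴ * G * B)).trace).re -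
          ((Tᵀ * (Bᴴ * G * B)).trace).re ^ 2) /
        (N * ‖T.trace‖) := by
  obtain ⟨α, hα⟩ := hid
  have hT : T.IsHermitian := isHermitian_of_transpose_eq_of_im_eq_zero hTsym hTreal
  have hH : (Bᴴ * G * B).IsHermitian := isHermitian_conjTranspose_mul_mul B hG
  rw [hTsym, hT.eq]
  refine ⟨hT.trace_im, hT.trace_mul_im hH, hT.trace_mul_mul_self_im hH, ?_⟩
  have hcost (θ : ℝ) :
      ‖(T * (A * NormedSpace.exp ((-(I * θ)) • G) * B)).trace‖ =
        ‖(T * NormedSpace.exp ((-(I * ↑(θ - θ₀))) • (Bᴴ * G * B))).trace‖ := by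
    rw [mul_exp_mul_eq_of_identity_config hB hα, Matrix.mul_smul, trace_smul, smul_eq_mul,
      norm_mul, norm_exp_I_mul_ofReal, one_mul]
  simp_rw [hcost]
  rw [iteratedDeriv_const_sub two_pos, iteratedDeriv_neg, iteratedDeriv_div_const,
    iteratedDeriv_comp_sub_const (f := fun s : ℝ =>
      ‖(T * NormedSpace.exp ((-(I * s)) • (Bᴴ * G * B))).trace‖)]
  dsimp only
  rw [sub_self, iteratedDeriv_two_norm_trace_mul_exp_neg_I_smul_zero hT hH hTtr]
  ring

/-- second derivative of the cost at an identity configuration, with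
`H = Bᴴ·G·B`: it equals `(Tr(T)·Tr(Tᵀ·H²) − (Tr(Tᵀ·H))²)/(N·|Tr(T)|)`, and the three
traces involved are real. -/
theorem cost_second_deriv_at_identity_config (N : ℕ) (hN : 1 ≤ N)
    (T G B A : Matrix (Fin N) (Fin N) ℂ)
    (hTreal : ∀ i j, (T i j).im = 0) (hTsym : Tᵀ = T) (hTtr : T.trace ≠ 0)
    (hG : G.IsHermitian) (hB : B ∈ Matrix.unitaryGroup (Fin N) ℂ) (θ₀ : ℝ)
    (hid : ∃ α : ℝ,
      A * NormedSpace.exp ((-(Complex.I * (θ₀ : ℂ))) • G) * B =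
        Complex.exp (Complex.I * α) • (1 : Matrix (Fin N) (Fin N) ℂ)) :
    (T.trace).im = 0 ∧ ((Tᵀ * (Bᴴ * G * B)).trace).im = 0 ∧
    ((Tᵀ * (Bᴴ * G * B) * (Bᴴ * G * B)).trace).im = 0 ∧
    iteratedDeriv 2
        (fun θ : ℝ =>
          1 - ‖(Tᴴ * (A * NormedSpace.exp ((-(Complex.I * (θ : ℂ))) • G) * B)).trace‖ / N)
        θ₀ =
      ((T.trace).re * ((Tᵀ * (Bᴴ * G * B) * (Bᴴ * G * B)).trace).re -
          ((Tᵀ * (Bᴴ * G * B)).trace).re ^ 2) /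
        (N * ‖T.trace‖) :=
  cost_second_deriv_at_identity_config_general N T G B A hTreal hTsym hTtr hG hB θ₀ hid
end

section
/- Let n ≥ 2 and let T_n ∈ M_{2^n}(ℂ) be the k-Toffoli gate (k = n−1). Consider a single layer V(a,b,c,d) of the hardware efficient ansatz on n qubits, and suppose the parameter point (a₀,b₀,c₀,d₀) satisfies V(a₀,b₀,c₀,d₀) = e^{iα}·I_{2^n} for some α ∈ ℝ. Then every first-order partial derivative of the cost function (a,b,c,d) ↦ 1 − |Tr(T_nᴴ·V(a,b,c,d))|/2^n with respect to any single parameter coordinate vanishes at (a₀,b₀,c₀,d₀); i.e., the identity configuration is a stationary point of the cost. -/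
open Matrix
open scoped Kronecker

/-! At a parameter point where `V = e^{iα} • 1`, varying one parameter by `s` turns the layer into
`e^{iα} • U E(s) U*` with `U` unitary and `E(s) = A + cos s • B + sin s • K`, where `A + B = 1`
and `K* = -K`: each gate is such a rotation (for the controlled `R_Y`, `A` is the control-off
projection), embedded on one or two qubits, and the rest of the circuit conjugates it because the
whole layer is a scalar. Hence `Tr (T V) = e^{iα} (a + b cos s + c sin s)` with `a + b = Tr T` and
`c = Tr (U* T U K)`. The Toffoli gate `T` is Hermitian with nonzero trace, so `a + b` is real and
nonzero while `c` is purely imaginary; thus `d/ds |Tr (T V)|² = 2 Re (conj (a + b) c) = 0` at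
`s = 0`, and so is the derivative of `|Tr (T V)| = √|Tr (T V)|²`. -/

section RotationFamily

variable {R S : Type*} [Ring R] [StarRing R] [Algebra ℂ R] [Ring S] [StarRing S] [Algebra ℂ S]

/-- Rotation gates `s ↦ exp (-i s G)` with `G² = 1` and their controlled versions have this shape,
with `E 0 = 1` and skew-Hermitian derivative `K` at `0`. -/
def IsRotationFamily (E : ℝ → R) : Prop :=
  ∃ A B K : R, A + B = 1 ∧ star K = -K ∧
    ∀ s, E s = A + (Real.cos s : ℂ) • B + (Real.sin s : ℂ) • K

lemma IsRotationFamily.map {E : ℝ → R} (hE : IsRotationFamily E) (f : R →⋆ₐ[ℂ] S) :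
    IsRotationFamily fun s => f (E s) := by
  obtain ⟨A, B, K, hAB, hK, hE⟩ := hE
  refine ⟨f A, f B, f K, by rw [← map_add, hAB, map_one], by rw [← map_star, hK, map_neg],
    fun s => by simp only [hE, map_add, map_smul]⟩

lemma IsRotationFamily.conj {E : ℝ → R} (hE : IsRotationFamily E) {U : R} (hU : U ∈ unitary R) :
    IsRotationFamily fun s => U * E s * star U := by
  obtain ⟨A, B, K, hAB, hK, hE⟩ := hE
  refine ⟨U * A * star U, U * B * star U, U * K * star U, ?_, ?_, fun s => ?_⟩
  · rw [← add_mul, ← mul_add, hAB, mul_one, Unitary.mul_star_self_of_mem hU]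
  · rw [star_mul, star_mul, star_star, hK, mul_assoc, neg_mul, mul_neg]
  · simp only [hE, mul_add, add_mul, mul_smul_comm, smul_mul_assoc]

end RotationFamily

lemma mem_unitary_of_add {R : Type*} [Monoid R] [StarMul R] {g : ℝ → R}
    (hadd : ∀ x y, g (x + y) = g x * g y) (hzero : g 0 = 1)
    (hstar : ∀ x, star (g x) = g (-x)) (x : ℝ) : g x ∈ unitary R := by
  rw [Unitary.mem_iff, hstar, ← hadd, ← hadd, neg_add_cancel, add_neg_cancel, hzero]
  exact ⟨rfl, rfl⟩

lemma hasDerivAt_norm_trig_comb (a b c : ℂ) (t₀ : ℝ) (hab : a + b ≠ 0)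
    (horth : (star (a + b) * c).re = 0) :
    HasDerivAt (fun t : ℝ => ‖a + (Real.cos (t - t₀) : ℂ) * b + (Real.sin (t - t₀) : ℂ) * c‖)
      0 t₀ := by
  set z : ℝ → ℂ := fun t => a + (Real.cos (t - t₀) : ℂ) * b + (Real.sin (t - t₀) : ℂ) * c
  have hshift : HasDerivAt (fun t : ℝ => t - t₀) 1 t₀ := (hasDerivAt_id t₀).sub_const t₀
  have hz : HasDerivAt z c t₀ :=
    (((hshift.cos.ofReal_comp.mul_const b).const_add a).add
      (hshift.sin.ofReal_comp.mul_const c)).congr_deriv (by simp)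
  have hz₀ : z t₀ = a + b := by simp [z]
  have hsq : HasDerivAt (fun t => ‖z t‖ ^ 2) 0 t₀ := by
    convert hz.norm_sq using 1
    rw [hz₀, Complex.inner, ← Complex.star_def, mul_comm c, horth, mul_zero]
  have hne : ‖z t₀‖ ^ 2 ≠ 0 := by rw [hz₀]; positivity
  simpa only [Real.sqrt_sq (norm_nonneg _), zero_div] using hsq.sqrt hne

theorem hasDerivAt_norm_trace_of_isRotationFamily {ι : Type*} [Fintype ι] [DecidableEq ι]
    {T : Matrix ι ι ℂ} (hT : T.IsHermitian) (htr : T.trace ≠ 0) {E : ℝ → Matrix ι ι ℂ}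
    (hE : IsRotationFamily E) {ph : ℂ} (hph : ph ≠ 0) (t₀ : ℝ) :
    HasDerivAt (fun t => ‖(T * (ph • E (t - t₀))).trace‖) 0 t₀ := by
  obtain ⟨A, B, K, hAB, hK, hE⟩ := hE
  have hexpand : ∀ t, (T * (ph • E (t - t₀))).trace = ph * (T * A).trace
      + (Real.cos (t - t₀) : ℂ) * (ph * (T * B).trace)
      + (Real.sin (t - t₀) : ℂ) * (ph * (T * K).trace) := fun t => by
    simp only [hE, Matrix.mul_smul, Matrix.mul_add, trace_add, trace_smul, smul_eq_mul]
    ring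
  have hsum : ph * (T * A).trace + ph * (T * B).trace = ph * T.trace := by
    rw [← mul_add, ← trace_add, ← Matrix.mul_add, hAB, Matrix.mul_one]
  have hτ : star T.trace = T.trace := by rw [← trace_conjTranspose, hT.eq]
  have hκ : star (T * K).trace = -(T * K).trace := by
    rw [← trace_conjTranspose, conjTranspose_mul, hT.eq, ← star_eq_conjTranspose, hK,
      Matrix.neg_mul, trace_neg, trace_mul_comm]
  simp only [hexpand]
  refine hasDerivAt_norm_trig_comb _ _ _ t₀ (by rw [hsum]; exact mul_ne_zero hph htr) ?_
  rw [hsum]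
  set w := star (ph * T.trace) * (ph * (T * K).trace)
  have hw : star w = -w := by
    simp only [w, star_mul', star_star, hτ, hκ]
    ring
  have hre := congrArg Complex.re hw
  rw [Complex.star_def, Complex.conj_re, Complex.neg_re] at hre
  linarith

section Gates

lemma P0_mul_P0 : P0 * P0 = P0 := by ext i j; fin_cases i <;> fin_cases j <;> simp [P0]
lemma P0_mul_P1 : P0 * P1 = 0 := by ext i j; fin_cases i <;> fin_cases j <;> simp [P0, P1]
lemma P1_mul_P0 : P1 * P0 = 0 := by ext i j; fin_cases i <;> fin_cases j <;> simp [P0, P1]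
lemma P1_mul_P1 : P1 * P1 = P1 := by ext i j; fin_cases i <;> fin_cases j <;> simp [P1]
lemma P0_add_P1 : P0 + P1 = 1 := by ext i j; fin_cases i <;> fin_cases j <;> simp [P0, P1]
lemma conjTranspose_P0 : P0ᴴ = P0 := by ext i j; fin_cases i <;> fin_cases j <;> simp [P0]
lemma conjTranspose_P1 : P1ᴴ = P1 := by ext i j; fin_cases i <;> fin_cases j <;> simp [P1]

variable {m : Type*} [DecidableEq m]

noncomputable def controlledGate (g : Matrix m m ℂ) : Matrix (Fin 2 × m) (Fin 2 × m) ℂ :=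
  P0 ⊗ₖ 1 + P1 ⊗ₖ g

lemma controlledGate_one : controlledGate (1 : Matrix m m ℂ) = 1 := by
  rw [controlledGate, ← add_kronecker, P0_add_P1, one_kronecker_one]

lemma controlledGate_mul [Fintype m] (g h : Matrix m m ℂ) :
    controlledGate (g * h) = controlledGate g * controlledGate h := by
  simp only [controlledGate, add_mul, mul_add, ← mul_kronecker_mul, P0_mul_P0, P0_mul_P1,
    P1_mul_P0, P1_mul_P1, mul_one, one_mul, zero_kronecker, add_zero, zero_add]

lemma star_controlledGate (g : Matrix m m ℂ) :
    star (controlledGate g) = controlledGate (star g) := by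
  simp only [controlledGate, star_eq_conjTranspose, conjTranspose_add, conjTranspose_kronecker,
    conjTranspose_one, conjTranspose_P0, conjTranspose_P1]

lemma IsRotationFamily.controlled [Fintype m] {E : ℝ → Matrix m m ℂ} (hE : IsRotationFamily E) :
    IsRotationFamily fun s => controlledGate (E s) := by
  obtain ⟨A, B, K, hAB, hK, hE⟩ := hE
  refine ⟨controlledGate A, P1 ⊗ₖ B, P1 ⊗ₖ K, ?_, ?_, fun s => ?_⟩
  · rw [controlledGate, add_assoc, ← kronecker_add, hAB, ← add_kronecker, P0_add_P1,
      one_kronecker_one]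
  · rw [star_eq_conjTranspose, conjTranspose_kronecker, conjTranspose_P1, ← star_eq_conjTranspose,
      hK]
    ext
    simp
  · simp only [controlledGate, hE, kronecker_add, kronecker_smul, add_assoc]

lemma RY_add (x y : ℝ) : RY (x + y) = RY x * RY y := by
  simp only [RY, mul_fin_two, Real.cos_add, Real.sin_add, Complex.ofReal_add,
    Complex.ofReal_sub, Complex.ofReal_mul]
  congr 1; ring_nf

lemma RY_zero : RY 0 = 1 := by simp [RY, one_fin_two]

lemma star_RY (x : ℝ) : star (RY x) = RY (-x) := by
  simp [RY, star_eq_conjTranspose, ← Matrix.ext_iff, Fin.forall_fin_two, ← Complex.cos_conj,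
    ← Complex.sin_conj]

lemma isRotationFamily_RY : IsRotationFamily RY :=
  ⟨0, 1, !![0, -1; 1, 0], by simp,
    by simp [star_eq_conjTranspose, ← Matrix.ext_iff, Fin.forall_fin_two],
    fun s => by simp [RY, one_fin_two]⟩

lemma RZ_add (x y : ℝ) : RZ (x + y) = RZ x * RZ y := by
  simp only [RZ, mul_fin_two, Complex.ofReal_add, mul_add, Complex.exp_add]
  simp

lemma RZ_zero : RZ 0 = 1 := by simp [RZ, one_fin_two]

lemma star_RZ (x : ℝ) : star (RZ x) = RZ (-x) := by
  simp [RZ, star_eq_conjTranspose, ← Matrix.ext_iff, Fin.forall_fin_two, ← Complex.exp_conj]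

lemma RZ_mem_unitary (x : ℝ) : RZ x ∈ unitary (Matrix (Fin 2) (Fin 2) ℂ) :=
  mem_unitary_of_add RZ_add RZ_zero star_RZ x

lemma isRotationFamily_RZ : IsRotationFamily RZ := by
  refine ⟨0, 1, -Complex.I • PZ, by simp,
    by simp [PZ, star_eq_conjTranspose, ← Matrix.ext_iff, Fin.forall_fin_two], fun s => ?_⟩
  have hneg : -Complex.I * s = ((-s : ℝ) : ℂ) * Complex.I := by push_cast; ring
  have hpos : Complex.I * s = (s : ℂ) * Complex.I := mul_comm _ _
  rw [RZ, hneg, hpos, Complex.exp_mul_I, Complex.exp_mul_I]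
  simp [PZ, one_fin_two, ← Complex.ofReal_cos, ← Complex.ofReal_sin]

lemma CRY_eq_controlledGate (θ : ℝ) : CRY θ = controlledGate (RY θ) := rfl

lemma CRY_add (x y : ℝ) : CRY (x + y) = CRY x * CRY y := by
  simp only [CRY_eq_controlledGate, RY_add, controlledGate_mul]

lemma CRY_mem_unitary (x : ℝ) : CRY x ∈ unitary (Matrix (Fin 2 × Fin 2) (Fin 2 × Fin 2) ℂ) :=
  mem_unitary_of_add CRY_add (by rw [CRY_eq_controlledGate, RY_zero, controlledGate_one])
    (fun y => by rw [CRY_eq_controlledGate, star_controlledGate, star_RY, CRY_eq_controlledGate]) x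

lemma isRotationFamily_CRY : IsRotationFamily CRY := isRotationFamily_RY.controlled

end Gates

section KroneckerPi

variable {ι m R : Type*} [Fintype ι] [CommRing R]

def kroneckerPi (M : ι → Matrix m m R) : Matrix (ι → m) (ι → m) R :=
  fun i j => ∏ k, M k (i k) (j k)

lemma kroneckerPi_mul [DecidableEq ι] [Fintype m] (M N : ι → Matrix m m R) :
    kroneckerPi M * kroneckerPi N = kroneckerPi (M * N) := by
  ext i j
  simp only [kroneckerPi, mul_apply, Pi.mul_apply, ← Finset.prod_mul_distrib]
  rw [Finset.prod_univ_sum, Fintype.piFinset_univ]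

lemma kroneckerPi_one [DecidableEq m] : kroneckerPi (1 : ι → Matrix m m R) = 1 := by
  ext i j
  simp only [kroneckerPi, Pi.one_apply, one_apply, Finset.prod_boole, Finset.mem_univ,
    true_implies, funext_iff]

lemma conjTranspose_kroneckerPi [StarRing R] (M : ι → Matrix m m R) :
    (kroneckerPi M)ᴴ = kroneckerPi fun k => (M k)ᴴ := by
  ext i j
  simp [kroneckerPi, conjTranspose_apply]

variable [DecidableEq ι] [DecidableEq m]

lemma kroneckerPi_mulSingle_apply (p : ι) (g : Matrix m m R) (i j : ι → m) :
    kroneckerPi (Pi.mulSingle p g) i j =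
      g (i p) (j p) * ∏ k ∈ Finset.univ.erase p, (1 : Matrix m m R) (i k) (j k) := by
  rw [kroneckerPi, ← Finset.mul_prod_erase _ _ (Finset.mem_univ p), Pi.mulSingle_eq_same]
  congr 1
  exact Finset.prod_congr rfl fun k hk => by rw [Pi.mulSingle_eq_of_ne (Finset.ne_of_mem_erase hk)]

lemma kroneckerPi_mulSingle_smul (p : ι) (r : R) (g : Matrix m m R) :
    kroneckerPi (Pi.mulSingle p (r • g)) = r • kroneckerPi (Pi.mulSingle p g) := by
  ext i j
  simp only [kroneckerPi_mulSingle_apply, Matrix.smul_apply, smul_eq_mul, mul_assoc]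

variable [Fintype m] [StarRing R]

def onFactor (p : ι) : Matrix m m R →⋆ₐ[R] Matrix (ι → m) (ι → m) R where
  toFun g := kroneckerPi (Pi.mulSingle p g)
  map_one' := by rw [Pi.mulSingle_one, kroneckerPi_one]
  map_mul' g h := by rw [kroneckerPi_mul, Pi.mulSingle_mul]
  map_zero' := by ext i j; simp [kroneckerPi_mulSingle_apply]
  map_add' g h := by ext i j; simp [kroneckerPi_mulSingle_apply, add_mul]
  commutes' r := by
    simp only [Algebra.algebraMap_eq_smul_one, kroneckerPi_mulSingle_smul, Pi.mulSingle_one,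
      kroneckerPi_one]
  map_star' g := by
    change kroneckerPi _ = star (kroneckerPi _)
    rw [star_eq_conjTranspose (kroneckerPi _), conjTranspose_kroneckerPi]
    congr 1
    funext k
    rcases eq_or_ne k p with rfl | h
    · simp [star_eq_conjTranspose]
    · simp [h]

lemma onFactor_apply (p : ι) (g : Matrix m m R) :
    onFactor p g = kroneckerPi (Pi.mulSingle p g) := rfl

end KroneckerPi

section Pair

variable {ι α : Type*} [DecidableEq ι] {p q : ι}

def splitPair (hpq : p ≠ q) : (ι → α) ≃ (α × α) × ({k // ¬(k = p ∨ k = q)} → α) where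
  toFun x := ((x p, x q), fun k => x k)
  invFun y k :=
    if hp : k = p then y.1.1 else if hq : k = q then y.1.2 else y.2 ⟨k, not_or.mpr ⟨hp, hq⟩⟩
  left_inv x := by
    funext k
    by_cases hp : k = p
    · simp [hp]
    · by_cases hq : k = q
      · subst hq; simp [hp]
      · simp [hp, hq]
  right_inv y := by
    refine Prod.ext (Prod.ext ?_ ?_) (funext fun k => ?_)
    · simp
    · simp [hpq.symm]
    · simp [not_or.mp k.2]

variable {R : Type*} [CommRing R] [Fintype ι] [DecidableEq α] (hpq : p ≠ q)

lemma one_apply_splitPair_snd (i j : ι → α) :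
    (1 : Matrix ({k // ¬(k = p ∨ k = q)} → α) _ R) (splitPair hpq i).2 (splitPair hpq j).2 =
      ∏ k, if k = p ∨ k = q then 1 else if i k = j k then (1 : R) else 0 := by
  simp only [← ite_or, Finset.prod_boole, one_apply, Finset.mem_univ, true_implies]
  congr 1
  simp [splitPair, funext_iff, or_iff_not_imp_left]

def onPair [StarRing R] [Fintype α] : Matrix (α × α) (α × α) R →⋆ₐ[R] Matrix (ι → α) (ι → α) R where
  toFun g := (g ⊗ₖ (1 : Matrix ({k // ¬(k = p ∨ k = q)} → α) _ R)).submatrix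
    (splitPair hpq) (splitPair hpq)
  map_one' := by rw [one_kronecker_one, submatrix_one_equiv]
  map_mul' g h := by rw [submatrix_mul_equiv, ← mul_kronecker_mul, mul_one]
  map_zero' := by ext; simp
  map_add' g h := by ext; simp [add_mul]
  commutes' r := by
    simp only [Algebra.algebraMap_eq_smul_one, smul_kronecker, one_kronecker_one]
    exact congrArg (r • ·) (submatrix_one_equiv (α := R) (splitPair hpq))
  map_star' g := by
    simp [star_eq_conjTranspose, conjTranspose_submatrix, conjTranspose_kronecker]

end Pair

lemma embed2_eq_onPair {n : ℕ} {p q : Fin n} (hpq : p ≠ q)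
    (g : Matrix (Fin 2 × Fin 2) (Fin 2 × Fin 2) ℂ) : embed2 n p q g = onPair hpq g := by
  ext i j
  rw [embed2, ← one_apply_splitPair_snd hpq]
  rfl

lemma exists_prod_map_update_eq {M ι : Type*} [Monoid M] [DecidableEq ι] (S : Submonoid M)
    {f : ι → M} (hf : ∀ j, f j ∈ S) {l : List ι} (hl : l.Nodup) {x : ι} (hx : x ∈ l) :
    ∃ P ∈ S, ∃ Q : M, ∀ y, (l.map (Function.update f x y)).prod = P * y * Q := by
  induction l with
  | nil => simp at hx
  | cons a l ih =>
    rw [List.nodup_cons] at hl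
    by_cases hax : a = x
    · subst hax
      refine ⟨1, S.one_mem, (l.map f).prod, fun y => ?_⟩
      have hrest : l.map (Function.update f a y) = l.map f :=
        List.map_congr_left fun j hj => Function.update_of_ne (ne_of_mem_of_not_mem hj hl.1) _ _
      rw [List.map_cons, List.prod_cons, Function.update_self, hrest, one_mul]
    · obtain ⟨P, hP, Q, hPQ⟩ := ih hl.2 ((List.mem_cons.mp hx).resolve_left (Ne.symm hax))
      refine ⟨f a * P, S.mul_mem (hf a) hP, Q, fun y => ?_⟩
      rw [List.map_cons, List.prod_cons, Function.update_of_ne hax, hPQ, mul_assoc, mul_assoc,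
        mul_assoc]

section HEA

variable {n : ℕ}

lemma fsucc_ne (hn : 2 ≤ n) (j : Fin n) : j ≠ fsucc j := by
  intro h
  have hval : j.val = (j.val + 1) % n := congrArg Fin.val h
  rcases Nat.lt_or_ge (j.val + 1) n with hlt | hge
  · rw [Nat.mod_eq_of_lt hlt] at hval
    omega
  · rw [show j.val + 1 = n by omega, Nat.mod_self] at hval
    omega

lemma heaD_mem_unitary (hn : 2 ≤ n) (d : Fin n → ℝ) :
    heaD n d ∈ unitary (Matrix (Fin n → Fin 2) (Fin n → Fin 2) ℂ) := by
  refine list_prod_mem fun X hX => ?_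
  obtain ⟨j, -, rfl⟩ := List.mem_map.mp (List.mem_reverse.mp hX)
  rw [embed2_eq_onPair (fsucc_ne hn j)]
  exact Unitary.map_mem _ (CRY_mem_unitary _)

lemma heaD_update (hn : 2 ≤ n) (d : Fin n → ℝ) (i : Fin n) :
    ∃ P ∈ unitary (Matrix (Fin n → Fin 2) (Fin n → Fin 2) ℂ), ∀ t,
      heaD n (Function.update d i t) =
        P * onPair (fsucc_ne hn i) (CRY (t - d i)) * star P * heaD n d := by
  set f : Fin n → Matrix (Fin n → Fin 2) (Fin n → Fin 2) ℂ :=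
    fun j => embed2 n j (fsucc j) (CRY (d j))
  have hf : ∀ j, f j ∈ unitary _ := fun j => by
    simp only [f, embed2_eq_onPair (fsucc_ne hn j)]
    exact Unitary.map_mem _ (CRY_mem_unitary _)
  have hupd : ∀ t, heaD n (Function.update d i t) =
      ((List.finRange n).reverse.map
        (Function.update f i (onPair (fsucc_ne hn i) (CRY t)))).prod := by
    intro t
    rw [heaD, ← List.map_reverse]
    congr 2
    funext j
    rcases eq_or_ne j i with rfl | h
    · simp [embed2_eq_onPair (fsucc_ne hn j)]
    · simp [f, h]
  obtain ⟨P, hP, Q, hPQ⟩ := exists_prod_map_update_eq _ hf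
    (List.nodup_reverse.mpr (List.nodup_finRange n)) (by simp : i ∈ (List.finRange n).reverse)
  have hD : heaD n d = P * onPair (fsucc_ne hn i) (CRY (d i)) * Q := by
    rw [← hPQ, ← embed2_eq_onPair, Function.update_eq_self, heaD, List.map_reverse]
  refine ⟨P, hP, fun t => ?_⟩
  rw [hupd, hPQ, hD]
  calc P * onPair (fsucc_ne hn i) (CRY t) * Q
      = P * (onPair (fsucc_ne hn i) (CRY (t - d i)) * onPair (fsucc_ne hn i) (CRY (d i))) * Q := by
        rw [← map_mul, ← CRY_add, sub_add_cancel]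
    _ = P * onPair (fsucc_ne hn i) (CRY (t - d i)) * star P
          * (P * onPair (fsucc_ne hn i) (CRY (d i)) * Q) := by
        have hcancel : ∀ X, star P * (P * X) = X := fun X => by
          rw [← mul_assoc, Unitary.star_mul_self_of_mem hP, one_mul]
        simp only [mul_assoc, hcancel]

lemma heaR_eq_kroneckerPi (a b c : Fin n → ℝ) :
    heaR n a b c = kroneckerPi fun k => RZ (c k) * RY (b k) * RZ (a k) := rfl

lemma heaR_update_a (a b c : Fin n → ℝ) (i : Fin n) (t : ℝ) :
    heaR n (Function.update a i t) b c = heaR n a b c * onFactor i (RZ (t - a i)) := by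
  rw [heaR_eq_kroneckerPi, heaR_eq_kroneckerPi, onFactor_apply, kroneckerPi_mul]
  congr 1
  funext k
  rcases eq_or_ne k i with rfl | h
  · simp [mul_assoc, ← RZ_add]
  · simp [h]

lemma heaR_update_b (a b c : Fin n → ℝ) (i : Fin n) (t : ℝ) :
    heaR n a (Function.update b i t) c =
      heaR n a b c * onFactor i (RZ (-a i) * RY (t - b i) * star (RZ (-a i))) := by
  rw [heaR_eq_kroneckerPi, heaR_eq_kroneckerPi, onFactor_apply, kroneckerPi_mul]
  congr 1
  funext k
  rcases eq_or_ne k i with rfl | h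
  · simp only [Function.update_self, Pi.mul_apply, Pi.mulSingle_eq_same, star_RZ, neg_neg,
      mul_assoc]
    rw [← mul_assoc (RZ (a k)), ← RZ_add, add_neg_cancel, RZ_zero, one_mul,
      ← mul_assoc (RY (b k)), ← RY_add, add_sub_cancel]
  · simp [h]

lemma heaR_update_c (a b c : Fin n → ℝ) (i : Fin n) (t : ℝ) :
    heaR n a b (Function.update c i t) = onFactor i (RZ (t - c i)) * heaR n a b c := by
  rw [heaR_eq_kroneckerPi, heaR_eq_kroneckerPi, onFactor_apply, kroneckerPi_mul]
  congr 1
  funext k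
  rcases eq_or_ne k i with rfl | h
  · simp [← mul_assoc, ← RZ_add]
  · simp [h]

end HEA

section Toffoli

variable {n : ℕ}

lemma toff_apply (hn : 0 < n) (i j : Fin n → Fin 2) :
    toff n i j = if ∀ k : Fin n, k.val + 1 < n → i k = 1 ∧ j k = 1 then
      PX (i ⟨n - 1, by omega⟩) (j ⟨n - 1, by omega⟩) else if i = j then 1 else 0 := by
  rw [toff]
  exact congrArg (fun M : Matrix (Fin n → Fin 2) (Fin n → Fin 2) ℂ => M i j) (dif_pos hn)

lemma PX_self (a : Fin 2) : PX a a = 0 := by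
  fin_cases a <;> simp [PX]

lemma star_PX (a b : Fin 2) : star (PX a b) = PX b a := by
  fin_cases a <;> fin_cases b <;> simp [PX]

lemma isHermitian_toff (n : ℕ) : (toff n).IsHermitian := by
  rcases Nat.eq_zero_or_pos n with rfl | hn
  · simp [toff, isHermitian_one]
  refine IsHermitian.ext fun i j => ?_
  rw [toff_apply hn, toff_apply hn]
  by_cases h : ∀ k : Fin n, k.val + 1 < n → i k = 1 ∧ j k = 1
  · rw [if_pos fun k hk => (h k hk).symm, if_pos h, star_PX]
  · rw [if_neg fun h' => h fun k hk => (h' k hk).symm, if_neg h]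
    by_cases hij : i = j <;> simp [hij, eq_comm]

lemma trace_toff_ne_zero (hn : 2 ≤ n) : (toff n).trace ≠ 0 := by
  have hdiag : ∀ i, toff n i i = if ¬∀ k : Fin n, k.val + 1 < n → i k = 1 then 1 else 0 := by
    intro i
    rw [toff_apply (by omega)]
    by_cases h : ∀ k : Fin n, k.val + 1 < n → i k = 1
    · rw [if_pos fun k hk => ⟨h k hk, h k hk⟩, if_neg (not_not.mpr h)]
      exact PX_self _
    · rw [if_neg fun h' => h fun k hk => (h' k hk).1, if_pos h, if_pos rfl]
  simp only [trace, diag, hdiag, Finset.sum_boole, Nat.cast_ne_zero, Finset.card_ne_zero]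
  refine ⟨0, ?_⟩
  simpa using ⟨⟨0, by omega⟩, by simp; omega⟩

end Toffoli

section Layer

variable {n : ℕ} {a b c d : Fin n → ℝ} {ph : ℂ}

lemma heaV_update_a (hV : heaV n a b c d = ph • 1) (i : Fin n) (t : ℝ) :
    heaV n (Function.update a i t) b c d = ph • onFactor i (RZ (t - a i)) := by
  rw [heaV, heaR_update_a, ← mul_assoc, ← heaV, hV, smul_mul_assoc, one_mul]

lemma heaV_update_b (hV : heaV n a b c d = ph • 1) (i : Fin n) (t : ℝ) :
    heaV n a (Function.update b i t) c d =
      ph • onFactor i (RZ (-a i) * RY (t - b i) * star (RZ (-a i))) := by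
  rw [heaV, heaR_update_b, ← mul_assoc, ← heaV, hV, smul_mul_assoc, one_mul]

lemma heaV_update_c (hn : 2 ≤ n) (hV : heaV n a b c d = ph • 1) (i : Fin n) (t : ℝ) :
    heaV n a b (Function.update c i t) d =
      ph • (heaD n d * onFactor i (RZ (t - c i)) * star (heaD n d)) := by
  have hR : heaR n a b c = star (heaD n d) * (ph • 1) := by
    rw [← hV, heaV, ← mul_assoc, Unitary.star_mul_self_of_mem (heaD_mem_unitary hn d), one_mul]
  rw [heaV, heaR_update_c, hR, Matrix.mul_smul, mul_one, Matrix.mul_smul, Matrix.mul_smul,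
    ← mul_assoc]

lemma heaV_update_d (hn : 2 ≤ n) (hV : heaV n a b c d = ph • 1) (i : Fin n) :
    ∃ P ∈ unitary (Matrix (Fin n → Fin 2) (Fin n → Fin 2) ℂ), ∀ t,
      heaV n a b c (Function.update d i t) =
        ph • (P * onPair (fsucc_ne hn i) (CRY (t - d i)) * star P) := by
  obtain ⟨P, hP, hD⟩ := heaD_update hn d i
  exact ⟨P, hP, fun t => by rw [heaV, hD, mul_assoc _ (heaD n d), ← heaV, hV, Matrix.mul_smul,
    mul_one]⟩

end Layer

/-- at any parameter point where the HEA layer is the identity up to a global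
phase, every first-order partial derivative of the cost
`1 − |Tr(T_nᴴ·V)|/2^n` (T_n the k-Toffoli, k = n−1) vanishes. -/
theorem hea_identity_config_is_stationary (n : ℕ) (hn : 2 ≤ n)
    (a₀ b₀ c₀ d₀ : Fin n → ℝ) (α : ℝ)
    (hid : heaV n a₀ b₀ c₀ d₀ =
      Complex.exp (Complex.I * α) • (1 : Matrix (Fin n → Fin 2) (Fin n → Fin 2) ℂ)) :
    ∀ i : Fin n,
      HasDerivAt (fun t : ℝ =>
        1 - ‖((toff n)ᴴ * heaV n (Function.update a₀ i t) b₀ c₀ d₀).trace‖ / 2 ^ n)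
        0 (a₀ i) ∧
      HasDerivAt (fun t : ℝ =>
        1 - ‖((toff n)ᴴ * heaV n a₀ (Function.update b₀ i t) c₀ d₀).trace‖ / 2 ^ n)
        0 (b₀ i) ∧
      HasDerivAt (fun t : ℝ =>
        1 - ‖((toff n)ᴴ * heaV n a₀ b₀ (Function.update c₀ i t) d₀).trace‖ / 2 ^ n)
        0 (c₀ i) ∧
      HasDerivAt (fun t : ℝ =>
        1 - ‖((toff n)ᴴ * heaV n a₀ b₀ c₀ (Function.update d₀ i t)).trace‖ / 2 ^ n)
        0 (d₀ i) := by
  intro i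
  set ph := Complex.exp (Complex.I * α)
  have stationary (E : ℝ → Matrix (Fin n → Fin 2) (Fin n → Fin 2) ℂ) (t₀ : ℝ)
      (hE : IsRotationFamily E) :
      HasDerivAt (fun t => 1 - ‖(toff n * (ph • E (t - t₀))).trace‖ / 2 ^ n) 0 t₀ := by
    simpa using ((hasDerivAt_norm_trace_of_isRotationFamily (isHermitian_toff n)
      (trace_toff_ne_zero hn) hE (Complex.exp_ne_zero _) t₀).div_const (2 ^ n)).const_sub 1
  obtain ⟨P, hP, hd⟩ := heaV_update_d hn hid i
  simp only [(isHermitian_toff n).eq, heaV_update_a hid, heaV_update_b hid, heaV_update_c hn hid,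
    hd]
  refine ⟨?_, ?_, ?_, ?_⟩
  · exact stationary (fun s => onFactor i (RZ s)) (a₀ i) (isRotationFamily_RZ.map (onFactor i))
  · exact stationary (fun s => onFactor i (RZ (-a₀ i) * RY s * star (RZ (-a₀ i)))) (b₀ i)
      ((isRotationFamily_RY.conj (RZ_mem_unitary (-a₀ i))).map (onFactor i))
  · exact stationary (fun s => heaD n d₀ * onFactor i (RZ s) * star (heaD n d₀)) (c₀ i)
      ((isRotationFamily_RZ.map (onFactor i)).conj (heaD_mem_unitary hn d₀))
  · exact stationary (fun s => P * onPair (fsucc_ne hn i) (CRY s) * star P) (d₀ i)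
      ((isRotationFamily_CRY.map (onPair (fsucc_ne hn i))).conj hP)
end

section
/- For all a, b, t ∈ ℝ: there exists α ∈ ℝ with R_Z(b)·R_Y(t)·R_Z(a) = e^{iα}·I₂ if and only if there exist integers u, v with t = π·u and a + b = π·v. -/
open Matrix
open scoped Kronecker

/-! The product is `!![e^{-i(a+b)} cos t, -e^{i(a-b)} sin t; e^{-i(a-b)} sin t, e^{i(a+b)} cos t]`.
It is scalar iff `sin t = 0` and the diagonal entries agree, i.e. `e^{-i(a+b)} = e^{i(a+b)}`, which
means `sin (a + b) = 0`. Conversely, `sin t = 0` gives `cos t = e^{it}`, so the scalar is the phase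
`e^{i(a+b+t)}`. -/

theorem Matrix.of_eq_smul_one_iff {R : Type*} [Semiring R] (p q r s c : R) :
    !![p, q; r, s] = c • (1 : Matrix (Fin 2) (Fin 2) R) ↔ p = c ∧ q = 0 ∧ r = 0 ∧ s = c := by
  simp [← Matrix.ext_iff, Fin.forall_fin_two, and_assoc]

section

open Complex

theorem Complex.exp_neg_mul_I_eq_exp_mul_I_iff (z : ℂ) :
    exp (-(z * I)) = exp (z * I) ↔ sin z = 0 := by
  rw [← neg_mul, exp_mul_I, exp_mul_I, cos_neg, sin_neg]
  constructor
  · intro h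
    have : 2 * I * sin z = 0 := by linear_combination -h
    simpa [I_ne_zero] using this
  · intro h
    rw [h]
    ring

theorem RZ_mul_RY_mul_RZ (a b t : ℝ) :
    RZ b * RY t * RZ a =
      !![exp (-(I * (a + b))) * cos t, -(exp (I * (a - b)) * sin t);
        exp (-(I * (a - b))) * sin t, exp (I * (a + b)) * cos t] := by
  ext i j
  fin_cases i <;> fin_cases j <;>
    simp [RZ, RY, mul_apply, Fin.sum_univ_two, mul_add, mul_sub, exp_add, exp_sub, exp_neg] <;> ring

theorem exists_RZ_mul_RY_mul_RZ_eq_phase_smul_one_iff (a b t : ℝ) :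
    (∃ α : ℝ, RZ b * RY t * RZ a = exp (I * α) • (1 : Matrix (Fin 2) (Fin 2) ℂ)) ↔
      Real.sin t = 0 ∧ Real.sin (a + b) = 0 := by
  simp only [RZ_mul_RY_mul_RZ, Matrix.of_eq_smul_one_iff]
  constructor
  · rintro ⟨α, h00, h01, -, h11⟩
    have ht : Real.sin t = 0 := by
      have : sin t = 0 := by simpa [exp_ne_zero] using h01
      exact_mod_cast this
    have hcos : cos t ≠ 0 := by
      rw [← ofReal_cos, ofReal_ne_zero]
      rcases Real.sin_eq_zero_iff_cos_eq.1 ht with h | h <;> simp [h]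
    have hphase := mul_right_cancel₀ hcos (h00.trans h11.symm)
    rw [mul_comm I, exp_neg_mul_I_eq_exp_mul_I_iff] at hphase
    exact ⟨ht, by exact_mod_cast hphase⟩
  · rintro ⟨ht, hab⟩
    have hsin : sin (t : ℂ) = 0 := by exact_mod_cast ht
    have hexp_t : exp (I * t) = cos t := by
      rw [mul_comm, exp_mul_I, hsin, zero_mul, add_zero]
    have hphase : exp (-(I * (a + b))) = exp (I * (a + b)) := by
      rw [mul_comm I, exp_neg_mul_I_eq_exp_mul_I_iff]
      exact_mod_cast hab
    have hα : exp (I * ↑(a + b + t)) = exp (I * (a + b)) * cos t := by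
      rw [ofReal_add, ofReal_add, mul_add, exp_add, hexp_t]
    exact ⟨a + b + t, by rw [hphase, hα], by simp [hsin], by simp [hsin], hα.symm⟩

end

/-- `R_Z(b)·R_Y(t)·R_Z(a)` is the identity up to a global phase iff
`t ∈ πℤ` and `a + b ∈ πℤ`. -/
theorem rz_ry_rz_eq_phase_id_iff (a b t : ℝ) :
    (∃ α : ℝ, RZ b * RY t * RZ a = Complex.exp (Complex.I * α) • (1 : Matrix (Fin 2) (Fin 2) ℂ)) ↔
      (∃ u : ℤ, t = Real.pi * u) ∧ (∃ v : ℤ, a + b = Real.pi * v) := by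
  simp only [exists_RZ_mul_RY_mul_RZ_eq_phase_smul_one_iff, Real.sin_eq_zero_iff, mul_comm Real.pi,
    eq_comm (a := t), eq_comm (a := a + b)]
end

section
/- Let n ≥ 2, let T_n ∈ M_{2^n}(ℂ) be the k-Toffoli gate (k = n−1), let i ∈ {1,…,n}, and let G = I_{2^{i−1}} ⊗ Y ⊗ I_{2^{n−i}} ∈ M_{2^n}(ℂ) be the Pauli Y acting on qubit i. Let D ∈ M_{2^n}(ℂ) be a diagonal unitary matrix, let A ∈ M_{2^n}(ℂ), and suppose there exist θ₀, α ∈ ℝ with A·exp(−iθ₀G)·D = e^{iα}·I_{2^n}. Then the second derivative at θ₀ of the function θ ↦ d(A·exp(−iθG)·D, T_n) = 1 − |Tr(T_nᴴ·A·exp(−iθG)·D)|/2^n is nonnegative. -/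
open Matrix
open scoped Kronecker

/-! `G = I ⊗ Y ⊗ I` is a Hermitian involution, so `exp (-iθG) = cos θ - i sin θ G`, and the
identity configuration turns the circuit into `e^{iα} (cos (θ - θ₀) - i sin (θ - θ₀) M)` with
`M = Dᴴ G D` Hermitian, unitary and with zero diagonal. The Toffoli gate differs from the identity
only on the span of `|1…10⟩, |1…11⟩`, so `Tr (Tᴴ M) = 2 Re M₁₀,₁₁ =: c` is real with `|c| ≤ 2`,
while `Tr Tᴴ = 2^n - 2 =: a`. Hence `|Tr (Tᴴ U(θ))|² = a² cos² (θ - θ₀) + c² sin² (θ - θ₀) ≤ a²`: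
the cost attains its minimum at `θ₀`, where its second derivative is therefore nonnegative. -/

theorem NormedSpace.exp_smul_of_mul_self_eq_one {𝔸 : Type*} [Ring 𝔸] [Algebra ℂ 𝔸]
    [TopologicalSpace 𝔸] [IsTopologicalRing 𝔸] [ContinuousSMul ℂ 𝔸] [T2Space 𝔸]
    {u : 𝔸} (hu : u * u = 1) (z : ℂ) :
    NormedSpace.exp (z • u) = Complex.cosh z • 1 + Complex.sinh z • u := by
  have hpow (k : ℕ) : u ^ k = ((1 + (-1) ^ k) / 2 : ℂ) • 1 + ((1 - (-1) ^ k) / 2 : ℂ) • u := by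
    induction k with
    | zero => simp
    | succ k ih =>
      rw [pow_succ, ih, add_mul, smul_mul_assoc, smul_mul_assoc, one_mul, hu]
      module
  have hexp (w : ℂ) : HasSum (fun k : ℕ => w ^ k / k.factorial) (Complex.exp w) := by
    simpa [Complex.exp_eq_exp_ℂ] using NormedSpace.expSeries_div_hasSum_exp w
  have hcosh : HasSum (fun k : ℕ => z ^ k / k.factorial * ((1 + (-1) ^ k) / 2))
      (Complex.cosh z) := by
    rw [← mul_div_cancel_left₀ (Complex.cosh z) two_ne_zero, Complex.two_cosh]
    refine (((hexp z).add (hexp (-z))).div_const 2).congr_fun fun k => ?_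
    rw [neg_pow]; ring
  have hsinh : HasSum (fun k : ℕ => z ^ k / k.factorial * ((1 - (-1) ^ k) / 2))
      (Complex.sinh z) := by
    rw [← mul_div_cancel_left₀ (Complex.sinh z) two_ne_zero, Complex.two_sinh]
    refine (((hexp z).sub (hexp (-z))).div_const 2).congr_fun fun k => ?_
    rw [neg_pow]; ring
  rw [NormedSpace.exp_eq_tsum ℂ]
  refine (tsum_congr fun k => ?_).trans ((hcosh.smul_const 1).add (hsinh.smul_const u)).tsum_eq
  rw [smul_pow, hpow, smul_smul, smul_add, smul_smul, smul_smul, inv_mul_eq_div]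

section

open Filter Set Topology

theorem IsLocalMin.deriv_deriv_nonneg {f : ℝ → ℝ} {x₀ : ℝ} (hf : IsLocalMin f x₀)
    (hc : ContinuousAt f x₀) : 0 ≤ deriv (deriv f) x₀ := by
  by_contra! hneg
  -- otherwise `deriv f < 0` just right of `x₀`, so `f` drops below `f x₀` there
  have hsign := eventually_nhdsWithin_sign_eq_of_deriv_neg hneg hf.deriv_eq_zero
  have hright : ∀ᶠ x in 𝓝[>] x₀, deriv f x < 0 ∧ f x₀ ≤ f x :=
    (deriv_neg_right_of_sign_deriv (nhdsWithin_le_nhds hsign)).and (nhdsWithin_le_nhds hf)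
  obtain ⟨b, hb, hsub⟩ := mem_nhdsGT_iff_exists_Ioo_subset.mp hright
  have hanti : StrictAntiOn f (Ico x₀ b) := by
    refine strictAntiOn_of_deriv_neg (convex_Ico x₀ b) (fun x hx => ?_) (fun x hx => ?_)
    · rcases eq_or_lt_of_le hx.1 with rfl | hlt
      · exact hc.continuousWithinAt
      · exact (differentiableAt_of_deriv_ne_zero (hsub ⟨hlt, hx.2⟩).1.ne).continuousAt
          |>.continuousWithinAt
    · rw [interior_Ico] at hx
      exact (hsub hx).1
  have hmid : (x₀ + b) / 2 ∈ Ioo x₀ b := ⟨by linarith [hb.out], by linarith [hb.out]⟩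
  exact (hsub hmid).2.not_gt (hanti ⟨le_rfl, hb.out⟩ (Ioo_subset_Ico_self hmid) hmid.1)

end

theorem Complex.norm_cosh_mul_I_mul_add_sinh_mul_I_mul_le (t : ℝ) {a c : ℝ} (h : |c| ≤ |a|) :
    ‖Complex.cosh (t * Complex.I) * a + Complex.sinh (t * Complex.I) * c‖ ≤ |a| := by
  have hc : c ^ 2 ≤ a ^ 2 := sq_le_sq.mpr h
  rw [Complex.cosh_mul_I, Complex.sinh_mul_I, ← Complex.ofReal_cos, ← Complex.ofReal_sin,
    show (Real.cos t : ℂ) * a + Real.sin t * Complex.I * c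
      = ↑(Real.cos t * a) + ↑(Real.sin t * c) * Complex.I by push_cast; ring,
    Complex.norm_add_mul_I, ← Real.sqrt_sq_eq_abs]
  gcongr
  nlinarith [Real.sin_sq_add_cos_sq t, mul_le_mul_of_nonneg_left hc (sq_nonneg (Real.sin t))]

namespace Matrix

variable {ι : Type*} [Fintype ι] [DecidableEq ι]

theorem IsDiag.conjTranspose_mul_mul_apply {D : Matrix ι ι ℂ} (hD : D.IsDiag)
    (G : Matrix ι ι ℂ) (x y : ι) : (Dᴴ * G * D) x y = star (D x x) * G x y * D y y := by
  rw [← hD.diagonal_diag]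
  simp [diagonal_conjTranspose, mul_diagonal, diagonal_mul]

theorem mul_exp_smul_mul_eq_smul {A G D : Matrix ι ι ℂ} (hG : G * G = 1)
    (hD : D ∈ unitaryGroup ι ℂ) {z₀ s : ℂ} (h₀ : A * NormedSpace.exp (z₀ • G) * D = s • 1)
    (z : ℂ) :
    A * NormedSpace.exp (z • G) * D =
      s • (Complex.cosh (z - z₀) • 1 + Complex.sinh (z - z₀) • (Dᴴ * G * D)) := by
  have hDDH : D * Dᴴ = 1 := mem_unitaryGroup_iff.mp hD
  have hDHD : Dᴴ * D = 1 := mem_unitaryGroup_iff'.mp hD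
  have hA : A * NormedSpace.exp (z₀ • G) = s • Dᴴ := by
    rw [← mul_one (A * _), ← hDDH, ← mul_assoc, h₀, smul_mul_assoc, one_mul]
  rw [← add_sub_cancel z₀ z, add_smul, exp_add_of_commute _ _
      (((Commute.refl G).smul_left _).smul_right _), ← mul_assoc, hA, add_sub_cancel_left,
    NormedSpace.exp_smul_of_mul_self_eq_one hG]
  simp only [smul_mul_assoc, Matrix.mul_add, Matrix.add_mul, mul_smul_comm, Matrix.mul_one, hDHD]

end Matrix

theorem embed1_eq_submatrix_kronecker (n : ℕ) (p : Fin n) (g : Matrix (Fin 2) (Fin 2) ℂ) :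
    embed1 n p g = (g ⊗ₖ (1 : Matrix ({k // k ≠ p} → Fin 2) ({k // k ≠ p} → Fin 2) ℂ)).submatrix
      (Equiv.funSplitAt p (Fin 2)) (Equiv.funSplitAt p (Fin 2)) := by
  ext x y
  simp only [embed1, submatrix_apply, kroneckerMap_apply, Equiv.funSplitAt_apply, one_apply,
    ← ite_or, Finset.prod_boole, funext_iff, Subtype.forall]
  congr 2
  simp [or_iff_not_imp_left]

theorem embed1_mul (n : ℕ) (p : Fin n) (g h : Matrix (Fin 2) (Fin 2) ℂ) :
    embed1 n p g * embed1 n p h = embed1 n p (g * h) := by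
  simp only [embed1_eq_submatrix_kronecker, submatrix_mul_equiv, ← mul_kronecker_mul, mul_one]

theorem embed1_one (n : ℕ) (p : Fin n) : embed1 n p 1 = 1 := by
  simp [embed1_eq_submatrix_kronecker, submatrix_one_equiv]

theorem embed1_conjTranspose (n : ℕ) (p : Fin n) (g : Matrix (Fin 2) (Fin 2) ℂ) :
    (embed1 n p g)ᴴ = embed1 n p gᴴ := by
  simp [embed1_eq_submatrix_kronecker, conjTranspose_submatrix, conjTranspose_kronecker]

theorem embed1_apply_self (n : ℕ) (p : Fin n) (g : Matrix (Fin 2) (Fin 2) ℂ)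
    (x : Fin n → Fin 2) : embed1 n p g x x = g (x p) (x p) := by
  simp [embed1]

theorem PY_mul_self : PY * PY = 1 := by
  ext a b; fin_cases a <;> fin_cases b <;> simp [PY, mul_apply, Fin.sum_univ_two]

theorem isHermitian_PY : PY.IsHermitian := by
  ext a b; fin_cases a <;> fin_cases b <;> simp [PY]

theorem PY_apply_self (b : Fin 2) : PY b b = 0 := by
  fin_cases b <;> simp [PY]

theorem embed1_PY_mul_self (n : ℕ) (p : Fin n) : embed1 n p PY * embed1 n p PY = 1 := by
  rw [embed1_mul, PY_mul_self, embed1_one]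

def allOnesButLast (m : ℕ) : Fin (m + 1) → Fin 2 :=
  Function.update (1 : Fin (m + 1) → Fin 2) (Fin.last m) 0

theorem allOnesButLast_ne_one (m : ℕ) : allOnesButLast m ≠ 1 := fun h => by
  simpa [allOnesButLast] using congrFun h (Fin.last m)

theorem forall_lt_last_eq_one_iff {m : ℕ} (x : Fin (m + 1) → Fin 2) :
    (∀ k : Fin (m + 1), k.val + 1 < m + 1 → x k = 1) ↔ x = allOnesButLast m ∨ x = 1 := by
  have hlt (k : Fin (m + 1)) : k.val + 1 < m + 1 ↔ k ≠ Fin.last m := by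
    rw [Ne, Fin.ext_iff, Fin.val_last]; omega
  simp only [hlt]
  constructor
  · intro h
    have hx : x = Function.update (1 : Fin (m + 1) → Fin 2) (Fin.last m) (x (Fin.last m)) := by
      ext k
      by_cases hk : k = Fin.last m
      · subst hk; simp
      · simp [Function.update_of_ne hk, h k hk]
    generalize x (Fin.last m) = b at hx
    fin_cases b
    · exact .inl hx
    · exact .inr (by simpa using hx)
  · rintro (rfl | rfl) k hk
    · simp [allOnesButLast, Function.update_of_ne hk]
    · rfl

theorem toff_succ (m : ℕ) :
    toff (m + 1) = 1 - single (allOnesButLast m) (allOnesButLast m) 1 - single 1 1 1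
      + single (allOnesButLast m) 1 1 + single 1 (allOnesButLast m) 1 := by
  have hne := allOnesButLast_ne_one m
  ext x y
  simp only [toff, Nat.add_one_pos, ↓reduceDIte, Matrix.add_apply, Matrix.sub_apply, one_apply,
    single_apply, forall_and]
  by_cases h : (∀ k : Fin (m + 1), k.val + 1 < m + 1 → x k = 1) ∧
      ∀ k : Fin (m + 1), k.val + 1 < m + 1 → y k = 1
  · rw [if_pos h]
    obtain ⟨hx, hy⟩ := h
    rcases (forall_lt_last_eq_one_iff x).mp hx with rfl | rfl <;>
      rcases (forall_lt_last_eq_one_iff y).mp hy with rfl | rfl <;>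
      simp [allOnesButLast, PX, Fin.last]
  · rw [if_neg h]
    rw [forall_lt_last_eq_one_iff, forall_lt_last_eq_one_iff] at h
    grind

theorem trace_conjTranspose_toff_mul (m : ℕ)
    (M : Matrix (Fin (m + 1) → Fin 2) (Fin (m + 1) → Fin 2) ℂ) :
    ((toff (m + 1))ᴴ * M).trace = M.trace - M (allOnesButLast m) (allOnesButLast m) - M 1 1
      + M 1 (allOnesButLast m) + M (allOnesButLast m) 1 := by
  simp only [toff_succ, conjTranspose_add, conjTranspose_sub, conjTranspose_one,
    conjTranspose_single, star_one, Matrix.add_mul, Matrix.sub_mul, trace_add,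
    trace_sub, trace_single_mul, smul_eq_mul, one_mul]
  ring

theorem trace_conjTranspose_toff (m : ℕ) : (toff (m + 1))ᴴ.trace = 2 ^ (m + 1) - 2 := by
  have h := trace_conjTranspose_toff_mul m 1
  rw [Matrix.mul_one, one_apply_ne (allOnesButLast_ne_one m),
    one_apply_ne (allOnesButLast_ne_one m).symm] at h
  simp only [h, trace_one, Fintype.card_pi, Fintype.card_fin, Finset.prod_const, Finset.card_univ,
    Nat.cast_pow, Nat.cast_ofNat, one_apply_eq, add_zero]
  ring

theorem trace_conjTranspose_toff_mul_of_isHermitian (m : ℕ)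
    {M : Matrix (Fin (m + 1) → Fin 2) (Fin (m + 1) → Fin 2) ℂ} (hMH : M.IsHermitian)
    (hM0 : ∀ x, M x x = 0) :
    ((toff (m + 1))ᴴ * M).trace = ↑(2 * (M (allOnesButLast m) 1).re) := by
  rw [trace_conjTranspose_toff_mul, ← hMH.apply 1 (allOnesButLast m)]
  simp only [trace, diag_apply, hM0, Finset.sum_const_zero, sub_self, RCLike.star_def, zero_add]
  rw [add_comm, Complex.add_conj]

theorem exists_trace_conjTranspose_toff_mul_conj_embed1_PY_eq_ofReal (m : ℕ) (i : Fin (m + 1))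
    {D : Matrix (Fin (m + 1) → Fin 2) (Fin (m + 1) → Fin 2) ℂ}
    (hD : D ∈ unitaryGroup _ ℂ) (hDdiag : D.IsDiag) :
    ∃ c : ℝ, ((toff (m + 1))ᴴ * (Dᴴ * embed1 (m + 1) i PY * D)).trace = c ∧ |c| ≤ 2 := by
  have hGH : (embed1 (m + 1) i PY).IsHermitian := by
    rw [IsHermitian, embed1_conjTranspose, isHermitian_PY.eq]
  have hG : embed1 (m + 1) i PY ∈ unitaryGroup _ ℂ := by
    rw [mem_unitaryGroup_iff, star_eq_conjTranspose, hGH.eq, embed1_PY_mul_self]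
  have hM : Dᴴ * embed1 (m + 1) i PY * D ∈ unitaryGroup _ ℂ :=
    mul_mem (mul_mem (Unitary.star_mem hD) hG) hD
  have hM0 (x : Fin (m + 1) → Fin 2) : (Dᴴ * embed1 (m + 1) i PY * D) x x = 0 := by
    rw [hDdiag.conjTranspose_mul_mul_apply, embed1_apply_self, PY_apply_self, mul_zero, zero_mul]
  refine ⟨_, trace_conjTranspose_toff_mul_of_isHermitian m
    (isHermitian_conjTranspose_mul_mul D hGH) hM0, ?_⟩
  rw [abs_mul, abs_two]
  linarith [Complex.abs_re_le_norm ((Dᴴ * embed1 (m + 1) i PY * D) (allOnesButLast m) 1),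
    entry_norm_bound_of_unitary hM (allOnesButLast m) 1]

/-- `T_n` the k-Toffoli (k = n−1), `G = I ⊗ Y ⊗ I` the Pauli Y on qubit `i`,
`D` a diagonal unitary, and `A·exp(−iθ₀G)·D` the identity up to a global phase. Then the
second derivative of `θ ↦ 1 − |Tr(T_nᴴ·A·exp(−iθG)·D)|/2^n` at `θ₀` is nonnegative. -/
theorem second_deriv_nonneg_ry_param (n : ℕ) (hn : 2 ≤ n) (i : Fin n)
    (D A : Matrix (Fin n → Fin 2) (Fin n → Fin 2) ℂ)
    (hD : D ∈ Matrix.unitaryGroup (Fin n → Fin 2) ℂ) (hDdiag : D.IsDiag)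
    (θ₀ α : ℝ)
    (hid : A * NormedSpace.exp ((-(Complex.I * (θ₀ : ℂ))) • embed1 n i PY) * D =
      Complex.exp (Complex.I * α) • (1 : Matrix (Fin n → Fin 2) (Fin n → Fin 2) ℂ)) :
    0 ≤ iteratedDeriv 2
        (fun θ : ℝ =>
          1 - ‖
            ((toff n)ᴴ *
              (A * NormedSpace.exp ((-(Complex.I * (θ : ℂ))) • embed1 n i PY) * D)).trace‖ /
            2 ^ n)
        θ₀ := by
  obtain ⟨m, rfl⟩ : ∃ m, n = m + 1 := ⟨n - 1, by omega⟩
  obtain ⟨c, hc, hc2⟩ := exists_trace_conjTranspose_toff_mul_conj_embed1_PY_eq_ofReal m i hD hDdiag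
  obtain ⟨a, ha⟩ : ∃ a : ℝ, a = 2 ^ (m + 1) - 2 := ⟨_, rfl⟩
  have hca : |c| ≤ |a| := by
    have : (2 : ℝ) ^ 2 ≤ 2 ^ (m + 1) := pow_le_pow_right₀ one_le_two (by omega)
    rw [abs_of_nonneg (show 0 ≤ a by linarith)]
    linarith
  have htrace (θ : ℝ) : ‖((toff (m + 1))ᴴ *
      (A * NormedSpace.exp ((-(Complex.I * (θ : ℂ))) • embed1 (m + 1) i PY) * D)).trace‖ =
      ‖Complex.cosh (↑(θ₀ - θ) * Complex.I) * a + Complex.sinh (↑(θ₀ - θ) * Complex.I) * c‖ := by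
    rw [Matrix.mul_exp_smul_mul_eq_smul (embed1_PY_mul_self _ i) hD hid, Matrix.mul_smul,
      trace_smul, Matrix.mul_add, trace_add, Matrix.mul_smul, Matrix.mul_smul, trace_smul,
      trace_smul, Matrix.mul_one, hc, trace_conjTranspose_toff, smul_eq_mul, norm_mul,
      Complex.norm_exp_I_mul_ofReal, one_mul,
      show -(Complex.I * θ) - -(Complex.I * θ₀) = ↑(θ₀ - θ) * Complex.I by push_cast; ring]
    simp [ha]
  simp only [htrace]
  rw [iteratedDeriv_succ, iteratedDeriv_one]
  refine IsLocalMin.deriv_deriv_nonneg (Filter.Eventually.of_forall fun θ => ?_) (by fun_prop)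
  simp only [sub_self, Complex.ofReal_zero, zero_mul, Complex.cosh_zero, Complex.sinh_zero,
    one_mul, add_zero, Complex.norm_real, Real.norm_eq_abs]
  gcongr
  exact Complex.norm_cosh_mul_I_mul_add_sinh_mul_I_mul_le _ hca
end
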